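/- arXiv:1105.0937 — 8 statements merged into one kernel-verified Lean document; each statement's English description precedes it below -/
import Mathlib

section
/- Let V : ℝ → [0,∞) be measurable and locally integrable, and let M be a finite-dimensional complex subspace of the space of smooth compactly supported functions ℝ → ℂ such that Q_V(ψ) < 0 for every nonzero ψ ∈ M. Then dim M ≤ 1 + ∫_ℝ |x| V(x) dx. -/
open MeasureTheory
open scoped ENNReal

/-- Quadratic form of the one-dimensional Schrödinger operator `H = -d²/dx² - V`. -/
noncomputable def schrodingerForm1D (V : ℝ → ℝ) (ψ : ℝ → ℂ) : ℝ :=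
  ∫ x : ℝ, (‖deriv ψ x‖ ^ 2 - V x * ‖ψ x‖ ^ 2)

/-!
The functions of `M` vanishing at `0` form a subspace `M₀` of codimension at most one. Pulling
back the `L²` inner product along `ψ ↦ ψ'` makes `M₀` an inner product space, and since
`ψ x = ∫₀ˣ ψ'` pairs `ψ'` with an indicator of measure `|x|`, Cauchy–Schwarz gives
`‖ψ x‖² ≤ |x| ‖ψ‖²`. For an orthonormal basis `(ψᵢ)` of `M₀`, this bound on the evaluation
functional at `x` yields `∑ ‖ψᵢ x‖² ≤ |x|`, while negativity of the form gives
`∫ V ‖ψᵢ‖² > ‖ψᵢ‖² = 1`. Summing over `i`, `dim M₀ ≤ ∫ V ∑ ‖ψᵢ‖² ≤ ∫ |x| V`.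
-/

open Set
open scoped ComplexConjugate

theorem Submodule.finrank_le_one_add_finrank_inf_ker {K V : Type*} [Field K] [AddCommGroup V]
    [Module K V] (M : Submodule K V) [FiniteDimensional K M] (f : V →ₗ[K] K) :
    Module.finrank K M ≤ 1 + Module.finrank K ↥(M ⊓ LinearMap.ker f) := by
  have hrange := Submodule.finrank_le (LinearMap.range (f ∘ₗ M.subtype))
  have hker : Module.finrank K ↥(LinearMap.ker (f ∘ₗ M.subtype))
      = Module.finrank K ↥(M ⊓ LinearMap.ker f) := by
    rw [← Submodule.finrank_map_subtype_eq, LinearMap.ker_comp, Submodule.map_comap_subtype]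
  rw [Module.finrank_self] at hrange
  have hnullity := LinearMap.finrank_range_add_finrank_ker (f ∘ₗ M.subtype)
  omega

lemma MeasureTheory.card_le_lintegral_of_one_le_integral {α ι : Type*} [MeasurableSpace α]
    {μ : Measure α} [Fintype ι] {g : ι → α → ℝ} {h : α → ℝ} (hg_int : ∀ i, Integrable (g i) μ)
    (hg_nonneg : ∀ i x, 0 ≤ g i x) (hg_one : ∀ i, 1 ≤ ∫ x, g i x ∂μ)
    (hle : ∀ x, ∑ i, g i x ≤ h x) :
    (Fintype.card ι : ℝ≥0∞) ≤ ∫⁻ x, ENNReal.ofReal (h x) ∂μ :=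
  calc (Fintype.card ι : ℝ≥0∞) = ENNReal.ofReal (∑ _i : ι, 1) := by simp
    _ ≤ ENNReal.ofReal (∑ i, ∫ x, g i x ∂μ) := by gcongr with i; exact hg_one i
    _ = ENNReal.ofReal (∫ x, ∑ i, g i x ∂μ) := by
      rw [integral_finsetSum _ fun i _ => hg_int i]
    _ = ∫⁻ x, ENNReal.ofReal (∑ i, g i x) ∂μ :=
      ofReal_integral_eq_lintegral_ofReal (integrable_finsetSum _ fun i _ => hg_int i)
        (.of_forall fun x => Finset.sum_nonneg fun i _ => hg_nonneg i x)
    _ ≤ ∫⁻ x, ENNReal.ofReal (h x) ∂μ := lintegral_mono fun x => ENNReal.ofReal_le_ofReal (hle x)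

lemma OrthonormalBasis.sum_norm_sq_apply_le {𝕜 E ι : Type*} [RCLike 𝕜] [NormedAddCommGroup E]
    [InnerProductSpace 𝕜 E] [Fintype ι] (b : OrthonormalBasis ι 𝕜 E) (ℓ : E →ₗ[𝕜] 𝕜) {C : ℝ}
    (hC : 0 ≤ C) (h : ∀ v, ‖ℓ v‖ ^ 2 ≤ C * ‖v‖ ^ 2) : ∑ i, ‖ℓ (b i)‖ ^ 2 ≤ C := by
  set S := ∑ i, ‖ℓ (b i)‖ ^ 2
  set v := ∑ i, conj (ℓ (b i)) • b i
  have hℓv : ℓ v = S := by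
    simp only [v, S, map_sum, map_smul, smul_eq_mul, RCLike.conj_mul,
      RCLike.ofReal_pow]
  have hv : ‖v‖ ^ 2 = S := by
    rw [← b.sum_sq_norm_inner_right]
    simp only [v, b.orthonormal.inner_right_fintype, RCLike.norm_conj, S]
  have hS : S ^ 2 ≤ C * S := by
    simpa [hℓv, hv, abs_of_nonneg (show 0 ≤ S by positivity)] using h v
  nlinarith [show 0 ≤ S by positivity]

lemma MeasureTheory.L2.norm_sq_eq_integral_norm_sq {α 𝕜 : Type*} [MeasurableSpace α]
    {μ : Measure α} [RCLike 𝕜] (f : Lp 𝕜 2 μ) :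
    ‖f‖ ^ 2 = ∫ x, ‖f x‖ ^ 2 ∂μ := by
  have h := inner_self_eq_norm_sq_to_K (𝕜 := 𝕜) f
  rw [L2.inner_def] at h
  simp only [inner_self_eq_norm_sq_to_K] at h
  simp_rw [← RCLike.ofReal_pow, integral_ofReal] at h
  exact_mod_cast h.symm

lemma HasCompactSupport.eq_zero_of_deriv_eq_zero {E : Type*} [NormedAddCommGroup E]
    [NormedSpace ℝ E] {f : ℝ → E} (hc : HasCompactSupport f) (hf : Differentiable ℝ f)
    (hf' : ∀ x, deriv f x = 0) : f = 0 := by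
  obtain ⟨y, hy⟩ := Set.ne_univ_iff_exists_notMem _ |>.1 hc.isCompact.ne_univ
  funext x
  rw [is_const_of_deriv_eq_zero hf hf' x y, image_eq_zero_of_notMem_tsupport hy, Pi.zero_apply]

lemma memLp_two_deriv {E : Type*} [NormedAddCommGroup E] [NormedSpace ℝ E] {ψ : ℝ → E}
    (hψ : ContDiff ℝ 1 ψ) (hc : HasCompactSupport ψ) :
    MemLp (deriv ψ) 2 volume :=
  (hψ.continuous_deriv le_rfl).memLp_of_hasCompactSupport hc.deriv

lemma MeasureTheory.LocallyIntegrable.integrable_mul_norm_sq {E : Type*} [NormedAddCommGroup E]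
    {V : ℝ → ℝ} (hV : LocallyIntegrable V volume) {ψ : ℝ → E} (hψ : Continuous ψ)
    (hc : HasCompactSupport ψ) : Integrable (fun x => V x * ‖ψ x‖ ^ 2) :=
  hV.integrable_smul_right_of_hasCompactSupport (hψ.norm.pow 2)
    (hc.comp_left (g := fun z : E => ‖z‖ ^ 2) (by simp))

lemma schrodingerForm1D_eq_sub {V : ℝ → ℝ} (hV : LocallyIntegrable V volume) {ψ : ℝ → ℂ}
    (hψ : ContDiff ℝ 1 ψ) (hc : HasCompactSupport ψ) :
    schrodingerForm1D V ψ = (∫ x, ‖deriv ψ x‖ ^ 2) - ∫ x, V x * ‖ψ x‖ ^ 2 :=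
  integral_sub ((memLp_two_deriv hψ hc).integrable_norm_pow two_ne_zero)
    (hV.integrable_mul_norm_sq hψ.continuous hc)

section DerivL2

variable (N : Submodule ℂ (ℝ → ℂ)) (hN : ∀ ψ ∈ N, ContDiff ℝ 1 ψ ∧ HasCompactSupport ψ)

noncomputable def derivL2 : N →ₗ[ℂ] Lp ℂ 2 (volume : Measure ℝ) where
  toFun ψ := (memLp_two_deriv (hN ψ ψ.2).1 (hN ψ ψ.2).2).toLp
  map_add' φ ψ := by
    have hφ := (hN φ φ.2).1.differentiable one_ne_zero
    have hψ := (hN ψ ψ.2).1.differentiable one_ne_zero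
    rw [← MemLp.toLp_add]
    exact MemLp.toLp_congr _ _ (.of_forall fun x => deriv_add (hφ x) (hψ x))
  map_smul' c ψ := by
    have hψ := (hN ψ ψ.2).1.differentiable one_ne_zero
    rw [RingHom.id_apply, ← MemLp.toLp_const_smul]
    exact MemLp.toLp_congr _ _ (.of_forall fun x => deriv_const_smul c (hψ x))

lemma coeFn_derivL2 (ψ : N) : derivL2 N hN ψ =ᵐ[volume] deriv ψ :=
  MemLp.coeFn_toLp (memLp_two_deriv (hN ψ ψ.2).1 (hN ψ ψ.2).2)

lemma injective_derivL2 : Function.Injective (derivL2 N hN) := by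
  refine (injective_iff_map_eq_zero _).2 fun ψ hψ => ?_
  obtain ⟨hsmooth, hsupp⟩ := hN ψ ψ.2
  have hzero : deriv (ψ : ℝ → ℂ) = fun _ => 0 :=
    (hsmooth.continuous_deriv le_rfl).ae_eq_iff_eq volume continuous_const |>.1 <|
      (coeFn_derivL2 N hN ψ).symm.trans (hψ ▸ Lp.coeFn_zero _ _ _)
  exact Subtype.ext (hsupp.eq_zero_of_deriv_eq_zero (hsmooth.differentiable one_ne_zero)
    (congrFun hzero))

lemma norm_derivL2_sq (ψ : N) : ‖derivL2 N hN ψ‖ ^ 2 = ∫ x, ‖deriv (ψ : ℝ → ℂ) x‖ ^ 2 := by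
  rw [L2.norm_sq_eq_integral_norm_sq]
  exact integral_congr_ae ((coeFn_derivL2 N hN ψ).fun_comp fun z => ‖z‖ ^ 2)

lemma norm_apply_sq_le_abs_mul_norm_derivL2_sq (ψ : N) (h0 : (ψ : ℝ → ℂ) 0 = 0) (x : ℝ) :
    ‖(ψ : ℝ → ℂ) x‖ ^ 2 ≤ |x| * ‖derivL2 N hN ψ‖ ^ 2 := by
  obtain ⟨hsmooth, hsupp⟩ := hN ψ ψ.2
  have hμs : volume (uIoc 0 x) ≠ ∞ := by simp [Real.volume_uIoc]
  set χ := indicatorConstLp 2 measurableSet_uIoc hμs (1 : ℂ)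
  have hftc : (ψ : ℝ → ℂ) x = ∫ t in (0 : ℝ)..x, deriv ψ t := by
    rw [intervalIntegral.integral_deriv_eq_sub (fun t _ => hsmooth.differentiable one_ne_zero t)
      ((hsmooth.continuous_deriv le_rfl).intervalIntegrable 0 x), h0, sub_zero]
  have hinner : ‖(ψ : ℝ → ℂ) x‖ = ‖inner ℂ χ (derivL2 N hN ψ)‖ := by
    rw [hftc, intervalIntegral.norm_integral_eq_norm_integral_uIoc, L2.inner_indicatorConstLp_one,
      integral_congr_ae (ae_restrict_of_ae (coeFn_derivL2 N hN ψ))]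
  have hχ : ‖χ‖ ^ 2 = |x| := by
    rw [norm_indicatorConstLp two_ne_zero ENNReal.ofNat_ne_top, norm_one, one_mul,
      measureReal_def, Real.volume_uIoc, ENNReal.toReal_ofReal (abs_nonneg _), sub_zero,
      ENNReal.toReal_ofNat, ← Real.sqrt_eq_rpow, Real.sq_sqrt (abs_nonneg _)]
  calc ‖(ψ : ℝ → ℂ) x‖ ^ 2 ≤ (‖χ‖ * ‖derivL2 N hN ψ‖) ^ 2 := by
        rw [hinner]; gcongr; exact norm_inner_le_norm _ _
    _ = |x| * ‖derivL2 N hN ψ‖ ^ 2 := by rw [mul_pow, hχ]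

end DerivL2

theorem finrank_le_lintegral_of_vanishing_at_zero {V : ℝ → ℝ} (hV0 : ∀ x, 0 ≤ V x)
    (hVloc : LocallyIntegrable V volume) (N : Submodule ℂ (ℝ → ℂ)) [FiniteDimensional ℂ N]
    (hN : ∀ ψ ∈ N, ContDiff ℝ 1 ψ ∧ HasCompactSupport ψ) (hN0 : ∀ ψ ∈ N, ψ 0 = 0)
    (hneg : ∀ ψ ∈ N, ψ ≠ 0 → schrodingerForm1D V ψ < 0) :
    (Module.finrank ℂ N : ℝ≥0∞) ≤ ∫⁻ x, ENNReal.ofReal (|x| * V x) := by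
  let : NormedAddCommGroup N :=
    NormedAddCommGroup.induced N _ (derivL2 N hN) (injective_derivL2 N hN)
  let : InnerProductSpace ℂ N := InnerProductSpace.induced (derivL2 N hN)
  have b := stdOrthonormalBasis ℂ N
  have hnorm (ψ : N) : ‖ψ‖ = ‖derivL2 N hN ψ‖ := rfl
  have heval (x : ℝ) (ψ : N) : ‖(LinearMap.proj x ∘ₗ N.subtype) ψ‖ ^ 2 ≤ |x| * ‖ψ‖ ^ 2 := by
    rw [hnorm]
    exact norm_apply_sq_le_abs_mul_norm_derivL2_sq N hN ψ (hN0 ψ ψ.2) x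
  have hsum (x : ℝ) : ∑ i, ‖(b i : ℝ → ℂ) x‖ ^ 2 ≤ |x| :=
    (b.sum_norm_sq_apply_le (LinearMap.proj x ∘ₗ N.subtype) (abs_nonneg x) (heval x) :)
  have hone (i) : 1 ≤ ∫ x, V x * ‖(b i : ℝ → ℂ) x‖ ^ 2 := by
    have hne : (b i : ℝ → ℂ) ≠ 0 := fun h => b.orthonormal.ne_zero i (Subtype.ext h)
    have hform := hneg _ (b i).2 hne
    rw [schrodingerForm1D_eq_sub hVloc (hN _ (b i).2).1 (hN _ (b i).2).2, ← norm_derivL2_sq N hN,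
      ← hnorm, b.orthonormal.1 i, one_pow] at hform
    linarith
  calc (Module.finrank ℂ N : ℝ≥0∞) = Fintype.card (Fin (Module.finrank ℂ N)) := by simp
    _ ≤ ∫⁻ x, ENNReal.ofReal (|x| * V x) :=
      card_le_lintegral_of_one_le_integral
        (fun i => hVloc.integrable_mul_norm_sq (hN _ (b i).2).1.continuous (hN _ (b i).2).2)
        (fun i x => mul_nonneg (hV0 x) (sq_nonneg _)) hone fun x => by
          rw [← Finset.mul_sum, mul_comm |x|]
          exact mul_le_mul_of_nonneg_left (hsum x) (hV0 x)

theorem bargmann_estimate_1d_general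
    (V : ℝ → ℝ) (hV0 : ∀ x, 0 ≤ V x)
    (hVloc : LocallyIntegrable V volume)
    (M : Submodule ℂ (ℝ → ℂ)) (hMfin : FiniteDimensional ℂ M)
    (hMsmooth : ∀ ψ ∈ M, ContDiff ℝ (⊤ : ℕ∞) ψ ∧ HasCompactSupport ψ)
    (hMneg : ∀ ψ ∈ M, ψ ≠ 0 → schrodingerForm1D V ψ < 0) :
    (Module.finrank ℂ M : ℝ≥0∞) ≤ 1 + ∫⁻ x : ℝ, ENNReal.ofReal (|x| * V x) := by
  set M₀ := M ⊓ LinearMap.ker (LinearMap.proj 0 : (ℝ → ℂ) →ₗ[ℂ] ℂ)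
  have : FiniteDimensional ℂ M₀ := Submodule.finiteDimensional_of_le inf_le_left
  have hM₀ (ψ) (hψ : ψ ∈ M₀) : ContDiff ℝ 1 ψ ∧ HasCompactSupport ψ :=
    ⟨(hMsmooth ψ hψ.1).1.of_le (by exact_mod_cast le_top), (hMsmooth ψ hψ.1).2⟩
  calc (Module.finrank ℂ M : ℝ≥0∞) ≤ 1 + (Module.finrank ℂ M₀ : ℝ≥0∞) := by
        exact_mod_cast M.finrank_le_one_add_finrank_inf_ker _
    _ ≤ 1 + ∫⁻ x : ℝ, ENNReal.ofReal (|x| * V x) := by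
        gcongr
        exact finrank_le_lintegral_of_vanishing_at_zero hV0 hVloc M₀ hM₀
          (fun ψ hψ => hψ.2) fun ψ hψ => hMneg ψ hψ.1

/-- Bargmann estimate for the one-dimensional Schrödinger operator, in variational form:
the dimension of any subspace of `C_c^∞(ℝ)` on which the quadratic form is negative
definite is at most `1 + ∫ |x| V(x) dx`. -/
theorem bargmann_estimate_1d
    (V : ℝ → ℝ) (hV0 : ∀ x, 0 ≤ V x) (hVmeas : Measurable V)
    (hVloc : LocallyIntegrable V volume)
    (M : Submodule ℂ (ℝ → ℂ)) (hMfin : FiniteDimensional ℂ M)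
    (hMsmooth : ∀ ψ ∈ M, ContDiff ℝ (⊤ : ℕ∞) ψ ∧ HasCompactSupport ψ)
    (hMneg : ∀ ψ ∈ M, ψ ≠ 0 → schrodingerForm1D V ψ < 0) :
    (Module.finrank ℂ M : ℝ≥0∞) ≤ 1 + ∫⁻ x : ℝ, ENNReal.ofReal (|x| * V x) :=
  bargmann_estimate_1d_general V hV0 hVloc M hMfin hMsmooth hMneg
end

section
/- Let V : ℤ → [0,∞) and let M be a finite-dimensional complex subspace of the space of finitely supported functions ℤ → ℂ such that Q_V(ψ) < 0 for every nonzero ψ ∈ M. Then dim M ≤ 1 + Σ_{x∈ℤ} |x| V(x). -/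
open scoped ENNReal

/-- Quadratic form of the one-dimensional lattice Schrödinger operator `H = -Δ - V`
on finitely supported functions `ℤ → ℂ`. -/
noncomputable def latticeForm1D (V : ℤ → ℝ) (ψ : ℤ → ℂ) : ℝ :=
  (∑' x : ℤ, ‖ψ (x + 1) - ψ x‖ ^ 2) - ∑' x : ℤ, V x * ‖ψ x‖ ^ 2

/-!
The functions of `M` vanishing at `0` form a subspace `N` of codimension at most one. On `N` the
difference map `ψ ↦ Δψ` into `ℓ²(ℤ)` is injective, and `ψ x = ⟪kₓ, Δψ⟫` where `kₓ` is the signed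
indicator of the integers between `0` and `x`, so `‖kₓ‖² = |x|`. For an orthonormal basis `(eⱼ)` of
`Δ(N)`, negativity of the form gives `1 = ‖eⱼ‖² ≤ ∑ₓ V x |⟪kₓ, eⱼ⟫|²`; summing over `j` and using
Bessel's inequality `∑ⱼ |⟪eⱼ, kₓ⟫|² ≤ ‖kₓ‖² = |x|` yields `dim N ≤ ∑ₓ |x| V x`.
-/

open scoped lp fwdDiff
open Function Module Finset

theorem Submodule.finrank_le_tsum_mul_norm_sq {𝕜 E ι : Type*} [RCLike 𝕜] [NormedAddCommGroup E]
    [InnerProductSpace 𝕜 E] (W : Submodule 𝕜 E) [FiniteDimensional 𝕜 W]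
    (V : ι → ℝ) (hV : ∀ x, 0 ≤ V x) (k : ι → E)
    (hW : ∀ w ∈ W, ENNReal.ofReal (‖w‖ ^ 2) ≤ ∑' x, ENNReal.ofReal (V x * ‖inner 𝕜 (k x) w‖ ^ 2)) :
    (finrank 𝕜 W : ℝ≥0∞) ≤ ∑' x, ENNReal.ofReal (V x * ‖k x‖ ^ 2) := by
  set b := stdOrthonormalBasis 𝕜 W
  have he : Orthonormal 𝕜 (W.subtypeₗᵢ ∘ b) := b.orthonormal.comp_linearIsometry _
  have hb : ∀ j, ‖(b j : E)‖ = 1 := b.orthonormal.1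
  calc (finrank 𝕜 W : ℝ≥0∞) = ∑ j, ENNReal.ofReal (‖(b j : E)‖ ^ 2) := by simp [hb]
    _ ≤ ∑ j, ∑' x, ENNReal.ofReal (V x * ‖inner 𝕜 (k x) (b j : E)‖ ^ 2) :=
        sum_le_sum fun j _ => hW _ (b j).2
    _ = ∑' x, ENNReal.ofReal (V x * ∑ j, ‖inner 𝕜 (b j : E) (k x)‖ ^ 2) := by
        rw [← Summable.tsum_finsetSum fun _ _ => ENNReal.summable]
        refine tsum_congr fun x => ?_
        rw [Finset.mul_sum, ENNReal.ofReal_sum_of_nonneg fun j _ => by have := hV x; positivity]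
        simp_rw [norm_inner_symm]
    _ ≤ ∑' x, ENNReal.ofReal (V x * ‖k x‖ ^ 2) :=
        ENNReal.tsum_le_tsum fun x => ENNReal.ofReal_le_ofReal <|
          mul_le_mul_of_nonneg_left (he.sum_inner_products_le (k x)) (hV x)

theorem LinearMap.finrank_le_finrank_ker_add_one {K V : Type*} [DivisionRing K] [AddCommGroup V]
    [Module K V] [FiniteDimensional K V] (f : V →ₗ[K] K) :
    finrank K V ≤ finrank K (ker f) + 1 := by
  have := (range f).finrank_le
  rw [finrank_self] at this
  have := f.finrank_range_add_finrank_ker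
  omega

theorem Finset.sum_Ico_fwdDiff_int {G : Type*} [AddCommGroup G] (f : ℤ → G) {a b : ℤ}
    (hab : a ≤ b) : ∑ y ∈ Ico a b, Δ_[1] f y = f b - f a := by
  induction b, hab using Int.leInduction with
  | base => simp
  | succ b hab ih =>
    rw [← insert_Ico_right_eq_Ico_add_one_of_not_isMax hab (not_isMax b), sum_insert (by simp), ih,
      fwdDiff]
    abel

theorem Finset.sum_Ico_sub_sum_Ico_fwdDiff_int {G : Type*} [AddCommGroup G] (f : ℤ → G)
    (a b : ℤ) : ∑ y ∈ Ico a b, Δ_[1] f y - ∑ y ∈ Ico b a, Δ_[1] f y = f b - f a := by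
  rcases le_total a b with hab | hba
  · rw [sum_Ico_fwdDiff_int f hab, Ico_eq_empty_of_le hab, sum_empty, sub_zero]
  · rw [sum_Ico_fwdDiff_int f hba, Ico_eq_empty_of_le hba, sum_empty, zero_sub, neg_sub]

theorem Set.Finite.support_fwdDiff {M G : Type*} [AddCommGroup M] [AddCommGroup G] {f : M → G}
    (hf : (support f).Finite) (h : M) : (support (Δ_[h] f)).Finite :=
  ((hf.preimage (add_left_injective h).injOn).union hf).subset
    (support_sub (fun x => f (x + h)) f)

noncomputable def signedIndicatorIco (x : ℤ) : ℓ²(ℤ, ℂ) :=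
  ∑ y ∈ Ico 0 x, lp.single 2 y 1 - ∑ y ∈ Ico x 0, lp.single 2 y 1

theorem inner_signedIndicatorIco (x : ℤ) (f : ℓ²(ℤ, ℂ)) :
    inner ℂ (signedIndicatorIco x) f = ∑ y ∈ Ico 0 x, f y - ∑ y ∈ Ico x 0, f y := by
  simp [signedIndicatorIco, lp.inner_single_left]

theorem signedIndicatorIco_apply (x y : ℤ) :
    signedIndicatorIco x y = (if y ∈ Ico 0 x then 1 else 0) - if y ∈ Ico x 0 then 1 else 0 := by
  simp only [signedIndicatorIco, lp.coeFn_sub, lp.coeFn_sum, lp.coeFn_single, Pi.sub_apply,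
    Finset.sum_apply, Finset.sum_pi_single]

theorem norm_signedIndicatorIco_sq (x : ℤ) : ‖signedIndicatorIco x‖ ^ 2 = |(x : ℝ)| := by
  rw [@norm_sq_eq_re_inner ℂ, inner_signedIndicatorIco]
  rcases le_or_gt 0 x with hx | hx
  · have h : ∀ y ∈ Ico 0 x, signedIndicatorIco x y = 1 := fun y hy => by
      simp_all [signedIndicatorIco_apply]
    simp only [sum_congr rfl h, Ico_eq_empty_of_le hx, sum_empty, sub_zero, sum_const,
      Int.card_Ico, nsmul_eq_mul, mul_one, RCLike.natCast_re,
      abs_of_nonneg (Int.cast_nonneg_iff.mpr hx)]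
    exact_mod_cast Int.toNat_of_nonneg hx
  · have h : ∀ y ∈ Ico x 0, signedIndicatorIco x y = -1 := fun y hy => by
      simp_all [signedIndicatorIco_apply]
    simp only [Ico_eq_empty_of_le hx.le, sum_empty, sum_congr rfl h, sum_neg_distrib, sum_const,
      Int.card_Ico, zero_sub, nsmul_eq_mul, mul_one, sub_neg_eq_add, zero_add, RCLike.natCast_re,
      abs_of_neg (Int.cast_lt_zero.mpr hx)]
    exact_mod_cast Int.toNat_of_nonneg (neg_nonneg.mpr hx.le)

noncomputable def fwdDiffL2 (M : Submodule ℂ (ℤ → ℂ)) (hM : ∀ ψ ∈ M, (support ψ).Finite) :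
    M →ₗ[ℂ] ℓ²(ℤ, ℂ) where
  toFun ψ := ⟨Δ_[1] ψ, (memℓp_zero ((hM ψ ψ.2).support_fwdDiff 1)).of_exponent_ge zero_le⟩
  map_add' ψ φ := lp.ext <| fwdDiff_add 1 (ψ : ℤ → ℂ) φ
  map_smul' c ψ := lp.ext <| fwdDiff_const_smul 1 c (ψ : ℤ → ℂ)

section fwdDiffL2

variable {M : Submodule ℂ (ℤ → ℂ)} (hM : ∀ ψ ∈ M, (support ψ).Finite)

theorem inner_signedIndicatorIco_fwdDiffL2 (x : ℤ) (ψ : M) :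
    inner ℂ (signedIndicatorIco x) (fwdDiffL2 M hM ψ) = (ψ : ℤ → ℂ) x - (ψ : ℤ → ℂ) 0 := by
  rw [inner_signedIndicatorIco]
  exact sum_Ico_sub_sum_Ico_fwdDiff_int (ψ : ℤ → ℂ) 0 x

theorem fwdDiffL2_injective : Injective (fwdDiffL2 M hM) := by
  refine (injective_iff_map_eq_zero _).mpr fun ψ hψ => ?_
  have hconst (x : ℤ) : (ψ : ℤ → ℂ) x = (ψ : ℤ → ℂ) 0 := by
    rw [← sub_eq_zero, ← inner_signedIndicatorIco_fwdDiffL2 hM, hψ, inner_zero_right]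
  obtain ⟨x, hx⟩ := (hM ψ ψ.2).exists_notMem
  ext y
  rw [hconst y, ← hconst x]
  exact notMem_support.mp hx

theorem norm_fwdDiffL2_sq (ψ : M) :
    ‖fwdDiffL2 M hM ψ‖ ^ 2 = ∑' x, ‖(ψ : ℤ → ℂ) (x + 1) - (ψ : ℤ → ℂ) x‖ ^ 2 := by
  simpa [fwdDiffL2, fwdDiff] using lp.norm_rpow_eq_tsum (p := 2) (by norm_num) (fwdDiffL2 M hM ψ)

theorem ofReal_norm_fwdDiffL2_sq_le {V : ℤ → ℝ} (hV : ∀ x, 0 ≤ V x) (ψ : M)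
    (hψ : latticeForm1D V ψ ≤ 0) :
    ENNReal.ofReal (‖fwdDiffL2 M hM ψ‖ ^ 2) ≤ ∑' x, ENNReal.ofReal (V x * ‖(ψ : ℤ → ℂ) x‖ ^ 2) := by
  have hsum : Summable fun x => V x * ‖(ψ : ℤ → ℂ) x‖ ^ 2 :=
    summable_of_hasFiniteSupport <| (hM ψ ψ.2).subset fun x hx => by simp_all
  rw [← ENNReal.ofReal_tsum_of_nonneg (fun x => by have := hV x; positivity) hsum,
    norm_fwdDiffL2_sq]
  rw [latticeForm1D] at hψ
  exact ENNReal.ofReal_le_ofReal (by linarith)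

end fwdDiffL2

/-- Bargmann estimate for the one-dimensional lattice Schrödinger operator, in
variational form. -/
theorem bargmann_estimate_lattice_1d
    (V : ℤ → ℝ) (hV0 : ∀ x, 0 ≤ V x)
    (M : Submodule ℂ (ℤ → ℂ)) (hMfin : FiniteDimensional ℂ M)
    (hMsupp : ∀ ψ ∈ M, (Function.support ψ).Finite)
    (hMneg : ∀ ψ ∈ M, ψ ≠ 0 → latticeForm1D V ψ < 0) :
    (Module.finrank ℂ M : ℝ≥0∞) ≤ 1 + ∑' x : ℤ, ENNReal.ofReal (|(x : ℝ)| * V x) := by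
  have hMnonpos (ψ : M) : latticeForm1D V ψ ≤ 0 := by
    rcases eq_or_ne ψ 0 with rfl | hψ
    · simp [latticeForm1D]
    · exact (hMneg ψ ψ.2 (by simpa using hψ)).le
  set N := LinearMap.ker ((LinearMap.proj 0 : (ℤ → ℂ) →ₗ[ℂ] ℂ).comp M.subtype)
  set W := N.map (fwdDiffL2 M hMsupp)
  have hW : ∀ w ∈ W, ENNReal.ofReal (‖w‖ ^ 2) ≤
      ∑' x, ENNReal.ofReal (V x * ‖inner ℂ (signedIndicatorIco x) w‖ ^ 2) := by
    rintro _ ⟨ψ, hψ0, rfl⟩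
    simpa [inner_signedIndicatorIco_fwdDiffL2, show (ψ : ℤ → ℂ) 0 = 0 from hψ0] using
      ofReal_norm_fwdDiffL2_sq_le hMsupp hV0 ψ (hMnonpos ψ)
  have hN : finrank ℂ N = finrank ℂ W :=
    (Submodule.equivMapOfInjective (fwdDiffL2 M hMsupp) (fwdDiffL2_injective hMsupp) N).finrank_eq
  calc (finrank ℂ M : ℝ≥0∞) ≤ finrank ℂ W + 1 := by
        exact_mod_cast hN ▸ LinearMap.finrank_le_finrank_ker_add_one _
    _ ≤ ∑' x, ENNReal.ofReal (V x * ‖signedIndicatorIco x‖ ^ 2) + 1 := by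
        gcongr
        exact W.finrank_le_tsum_mul_norm_sq V hV0 _ hW
    _ = 1 + ∑' x : ℤ, ENNReal.ofReal (|(x : ℝ)| * V x) := by
        simp_rw [norm_signedIndicatorIco_sq, mul_comm, add_comm]
end

section
/- There exists a constant C > 0 with the following property: for every V : ℤ² → [0,∞) and every finite-dimensional complex subspace M of the space of finitely supported functions ℤ² → ℂ such that Q_V(ψ) < 0 for every nonzero ψ ∈ M, one has dim M ≤ C Σ_{x∈ℤ²} ln(2+|x|) V(x) + 1. -/
open scoped ENNReal

/-- Euclidean norm of a point of the lattice `ℤ²`. -/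
noncomputable def normZ2 (x : ℤ × ℤ) : ℝ :=
  Real.sqrt ((x.1 : ℝ) ^ 2 + (x.2 : ℝ) ^ 2)

/-- Quadratic form of the two-dimensional lattice Schrödinger operator `H = -Δ - V`
on finitely supported functions `ℤ² → ℂ`. -/
noncomputable def latticeForm2D (V : ℤ × ℤ → ℝ) (ψ : ℤ × ℤ → ℂ) : ℝ :=
  (∑' x : ℤ × ℤ, (‖ψ (x.1 + 1, x.2) - ψ x‖ ^ 2 + ‖ψ (x.1, x.2 + 1) - ψ x‖ ^ 2)) -
    ∑' x : ℤ × ℤ, V x * ‖ψ x‖ ^ 2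

/-!
On the subspace `E = {ψ ∈ M | ψ 0 = 0}`, of codimension at most one in `M`, the Dirichlet form
`D` is an inner product, and evaluation at `z` has norm squared `O(log (2 + |z|))`: compare `ψ z`
with its averages over a chain of dyadic squares of sides `1, 2, …, 2^K ≈ |z|` attached to `z`, do
the same at the origin, and bridge the two largest squares. By Cauchy–Schwarz each link costs a
bounded multiple of the energy of a block containing both squares, and these blocks overlap at most
twice, so `|ψ z - ψ 0|² ≤ C (K + 1) D(ψ)`.

For a `D`-orthonormal basis `bᵢ` of `E`, `∑ᵢ |bᵢ x|²` is the squared norm of evaluation at `x`,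
hence at most `C log (2 + |x|)`, while `Q_V(bᵢ) < 0` says `1 < ∑ₓ V x |bᵢ x|²`. Summing over `i`
gives `dim E ≤ C ∑ₓ log (2 + |x|) V x`.
-/

open Finset Function
open scoped BigOperators InnerProductSpace ComplexConjugate

theorem OrthonormalBasis.sum_sq_norm_le_of_sq_norm_le {𝕜 E ι : Type*} [RCLike 𝕜]
    [NormedAddCommGroup E] [InnerProductSpace 𝕜 E] [FiniteDimensional 𝕜 E] [Fintype ι]
    (b : OrthonormalBasis ι 𝕜 E) (ℓ : E →ₗ[𝕜] 𝕜) {c : ℝ} (hc : 0 ≤ c)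
    (hℓ : ∀ e, ‖ℓ e‖ ^ 2 ≤ c * ‖e‖ ^ 2) :
    ∑ i, ‖ℓ (b i)‖ ^ 2 ≤ c := by
  have := FiniteDimensional.complete 𝕜 E
  set v := (InnerProductSpace.toDual 𝕜 E).symm (LinearMap.toContinuousLinearMap ℓ)
  have hv : ∀ e, ℓ e = ⟪v, e⟫_𝕜 := fun e => by simp [v]
  simp only [hv, b.sum_sq_norm_inner_left]
  have := hℓ v
  rw [hv, inner_self_eq_norm_sq_to_K, norm_pow, RCLike.norm_ofReal, abs_norm] at this
  nlinarith [norm_nonneg v]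

theorem finrank_le_tsum_of_sq_norm_le {X E : Type*} [NormedAddCommGroup E]
    [InnerProductSpace ℂ E] [FiniteDimensional ℂ E] (ev : E →ₗ[ℂ] X → ℂ) {V w : X → ℝ}
    (hV : ∀ x, 0 ≤ V x) (hw : ∀ x, 0 ≤ w x) (hev : ∀ e x, ‖ev e x‖ ^ 2 ≤ w x * ‖e‖ ^ 2)
    (hle : ∀ e, ENNReal.ofReal (‖e‖ ^ 2) ≤ ∑' x, ENNReal.ofReal (V x * ‖ev e x‖ ^ 2)) :
    (Module.finrank ℂ E : ℝ≥0∞) ≤ ∑' x, ENNReal.ofReal (w x * V x) := by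
  let b := stdOrthonormalBasis ℂ E
  have hκ : ∀ x, ∑ i, ‖ev (b i) x‖ ^ 2 ≤ w x := fun x =>
    b.sum_sq_norm_le_of_sq_norm_le ((LinearMap.proj x).comp ev) (hw x) (hev · x)
  calc (Module.finrank ℂ E : ℝ≥0∞) = ∑ i, ENNReal.ofReal (‖b i‖ ^ 2) := by
        simp [b.orthonormal.1]
    _ ≤ ∑ i, ∑' x, ENNReal.ofReal (V x * ‖ev (b i) x‖ ^ 2) := sum_le_sum fun i _ => hle (b i)
    _ = ∑' x, ENNReal.ofReal (V x * ∑ i, ‖ev (b i) x‖ ^ 2) := by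
        rw [← Summable.tsum_finsetSum fun _ _ => ENNReal.summable]
        refine tsum_congr fun x => ?_
        rw [Finset.mul_sum, ENNReal.ofReal_sum_of_nonneg fun i _ => mul_nonneg (hV x) (sq_nonneg _)]
    _ ≤ ∑' x, ENNReal.ofReal (w x * V x) := by
        refine ENNReal.tsum_le_tsum fun x => ENNReal.ofReal_le_ofReal ?_
        rw [mul_comm (w x)]
        exact mul_le_mul_of_nonneg_left (hκ x) (hV x)

theorem norm_sum_sq_le_card_mul {ι E : Type*} [SeminormedAddCommGroup E] (s : Finset ι)
    (f : ι → E) : ‖∑ i ∈ s, f i‖ ^ 2 ≤ #s * ∑ i ∈ s, ‖f i‖ ^ 2 :=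
  (pow_le_pow_left₀ (norm_nonneg _) (norm_sum_le s f) 2).trans sq_sum_le_card_mul_sum_sq

theorem norm_add_sq_le {E : Type*} [SeminormedAddCommGroup E] (a b : E) :
    ‖a + b‖ ^ 2 ≤ 2 * (‖a‖ ^ 2 + ‖b‖ ^ 2) :=
  (pow_le_pow_left₀ (norm_nonneg _) (norm_add_le a b) 2).trans add_sq_le

theorem norm_add₃_sq_le {E : Type*} [SeminormedAddCommGroup E] (a b c : E) :
    ‖a + b + c‖ ^ 2 ≤ 3 * (‖a‖ ^ 2 + ‖b‖ ^ 2 + ‖c‖ ^ 2) := by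
  simpa [Fin.sum_univ_three, add_assoc] using norm_sum_sq_le_card_mul univ ![a, b, c]

theorem Int.sum_Ico_sub {G : Type*} [AddCommGroup G] (f : ℤ → G) {a b : ℤ} (hab : a ≤ b) :
    ∑ x ∈ Ico a b, (f (x + 1) - f x) = f b - f a := by
  induction b, hab using Int.leInduction with
  | base => simp
  | succ b hab ih =>
    rw [← insert_Ico_right_eq_Ico_add_one hab, sum_insert (by simp), ih]
    abel

theorem Int.norm_sub_sq_le_mul_sum_Ico {E : Type*} [SeminormedAddCommGroup E] (f : ℤ → E)
    {lo hi a b : ℤ} (ha : a ∈ Icc lo hi) (hb : b ∈ Icc lo hi) :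
    ‖f b - f a‖ ^ 2 ≤ (hi - lo) * ∑ x ∈ Ico lo hi, ‖f (x + 1) - f x‖ ^ 2 := by
  rw [mem_Icc] at ha hb
  wlog hab : a ≤ b generalizing a b
  · rw [norm_sub_rev]; exact this hb ha (by omega)
  rw [← Int.sum_Ico_sub f hab]
  refine (norm_sum_sq_le_card_mul _ _).trans (mul_le_mul ?_ ?_ (by positivity) ?_)
  · rw [Int.card_Ico]; exact_mod_cast (by omega : ((b - a).toNat : ℤ) ≤ hi - lo)
  · exact sum_le_sum_of_subset_of_nonneg (Ico_subset_Ico (by omega) (by omega))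
      fun _ _ _ => by positivity
  · exact sub_nonneg.2 (by exact_mod_cast (by omega : lo ≤ hi))

theorem Int.natCast_card_Ico {a b : ℤ} (h : a ≤ b) : (#(Ico a b) : ℝ) = b - a := by
  rw [Int.card_Ico, ← Int.cast_natCast, Int.toNat_of_nonneg (by omega)]
  push_cast; ring

theorem norm_expect_sub_expect_sq_le {ι κ : Type*} {s : Finset ι} {t : Finset κ}
    (hs : s.Nonempty) (ht : t.Nonempty) (f : ι → ℂ) (g : κ → ℂ) :
    ‖𝔼 i ∈ s, f i - 𝔼 j ∈ t, g j‖ ^ 2 ≤ 𝔼 p ∈ s ×ˢ t, ‖f p.1 - g p.2‖ ^ 2 := by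
  have hst : 𝔼 i ∈ s, f i - 𝔼 j ∈ t, g j = 𝔼 p ∈ s ×ˢ t, (f p.1 - g p.2) := by
    rw [expect_sub_distrib, expect_product, expect_product]
    simp [hs, ht]
  have hjensen := expect_mul_sq_le_sq_mul_sq (s ×ˢ t) (fun p => ‖f p.1 - g p.2‖) 1
  simp only [Pi.one_apply, mul_one, one_pow, expect_const (hs.product ht)] at hjensen
  rw [hst]
  exact (pow_le_pow_left₀ (norm_nonneg _) (RCLike.norm_expect_le (K := ℝ)) 2).trans hjensen

theorem sum_sum_le_tsum_of_pairwiseDisjoint {α ι : Type*} {f : α → ℝ} (hf : ∀ v, 0 ≤ f v)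
    (hsum : Summable f) {A : ι → Finset α} {t : Finset ι}
    (hA : (t : Set ι).PairwiseDisjoint A) : ∑ i ∈ t, ∑ v ∈ A i, f v ≤ ∑' v, f v := by
  classical
  rw [← sum_biUnion hA]
  exact hsum.sum_le_tsum _ fun v _ => hf v

theorem sum_sum_le_two_mul_tsum {α : Type*} {f : α → ℝ} (hf : ∀ v, 0 ≤ f v) (hsum : Summable f)
    {A : ℕ → Finset α} (hA : ∀ i j, i + 2 ≤ j → Disjoint (A i) (A j)) (K : ℕ) :
    ∑ k ∈ range K, ∑ v ∈ A k, f v ≤ 2 * ∑' v, f v := by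
  have hparity : ∀ r, ((range K).filter (· % 2 = r) : Set ℕ).PairwiseDisjoint A := by
    intro r i hi j hj hij
    simp only [coe_filter, Set.mem_ofPred_eq] at hi hj
    rcases lt_or_gt_of_ne hij with h | h
    · exact hA i j (by omega)
    · exact (hA j i (by omega)).symm
  rw [← sum_filter_add_sum_filter_not _ (· % 2 = 0)]
  simp only [Nat.mod_two_ne_zero]
  linarith [sum_sum_le_tsum_of_pairwiseDisjoint hf hsum (hparity 0),
    sum_sum_le_tsum_of_pairwiseDisjoint hf hsum (hparity 1)]

theorem exists_two_pow_between {r : ℝ} (hr : 0 ≤ r) :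
    ∃ K : ℕ, r ≤ 2 ^ K ∧ (2 : ℝ) ^ K ≤ 2 * (1 + r) := by
  obtain ⟨n, hn, hn'⟩ := exists_nat_pow_near (by linarith : (1 : ℝ) ≤ 1 + r) one_lt_two
  exact ⟨n + 1, by linarith, by rw [pow_succ]; linarith⟩

theorem LinearMap.finrank_le_finrank_ker_add_one_s5 {K M : Type*} [Field K] [AddCommGroup M]
    [Module K M] [FiniteDimensional K M] (ℓ : M →ₗ[K] K) :
    Module.finrank K M ≤ Module.finrank K (LinearMap.ker ℓ) + 1 := by
  have := (LinearMap.range ℓ).finrank_le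
  rw [Module.finrank_self] at this
  have := ℓ.finrank_range_add_finrank_ker
  omega

theorem Submodule.finrank_le_finrank_inf_ker_add_one {K V : Type*} [Field K] [AddCommGroup V]
    [Module K V] (M : Submodule K V) [FiniteDimensional K M] (ℓ : V →ₗ[K] K) :
    Module.finrank K M ≤ Module.finrank K ↥(M ⊓ LinearMap.ker ℓ) + 1 := by
  rw [← M.map_comap_subtype, ← LinearMap.ker_comp, Submodule.finrank_map_subtype_eq]
  exact (ℓ ∘ₗ M.subtype).finrank_le_finrank_ker_add_one_s5

namespace LatticeZ2

noncomputable def energyDensity (ψ : ℤ × ℤ → ℂ) (x : ℤ × ℤ) : ℝ :=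
  ‖ψ (x.1 + 1, x.2) - ψ x‖ ^ 2 + ‖ψ (x.1, x.2 + 1) - ψ x‖ ^ 2

section

variable (ψ : ℤ × ℤ → ℂ)

noncomputable def dirichletEnergy : ℝ := ∑' x, energyDensity ψ x

theorem latticeForm2D_eq (V : ℤ × ℤ → ℝ) :
    latticeForm2D V ψ = dirichletEnergy ψ - ∑' x, V x * ‖ψ x‖ ^ 2 := rfl

theorem energyDensity_nonneg (x : ℤ × ℤ) : 0 ≤ energyDensity ψ x := by
  unfold energyDensity; positivity

theorem sum_energyDensity_le_dirichletEnergy (hψ : Summable (energyDensity ψ))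
    (s : Finset (ℤ × ℤ)) : ∑ v ∈ s, energyDensity ψ v ≤ dirichletEnergy ψ :=
  hψ.sum_le_tsum s fun v _ => energyDensity_nonneg ψ v

theorem norm_sub_sq_le_row_add_col {lo₁ hi₁ lo₂ hi₂ : ℤ} {p q : ℤ × ℤ}
    (hp₁ : p.1 ∈ Icc lo₁ hi₁) (hq₁ : q.1 ∈ Icc lo₁ hi₁)
    (hp₂ : p.2 ∈ Icc lo₂ hi₂) (hq₂ : q.2 ∈ Icc lo₂ hi₂) :
    ‖ψ p - ψ q‖ ^ 2 ≤
      2 * (hi₁ - lo₁) * ∑ x ∈ Ico lo₁ hi₁, ‖ψ (x + 1, p.2) - ψ (x, p.2)‖ ^ 2 +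
        2 * (hi₂ - lo₂) * ∑ y ∈ Ico lo₂ hi₂, ‖ψ (q.1, y + 1) - ψ (q.1, y)‖ ^ 2 := by
  have hrow := Int.norm_sub_sq_le_mul_sum_Ico (fun x => ψ (x, p.2)) hq₁ hp₁
  have hcol := Int.norm_sub_sq_le_mul_sum_Ico (fun y => ψ (q.1, y)) hq₂ hp₂
  calc ‖ψ p - ψ q‖ ^ 2 = ‖(ψ (p.1, p.2) - ψ (q.1, p.2)) + (ψ (q.1, p.2) - ψ (q.1, q.2))‖ ^ 2 := by
        simp
    _ ≤ _ := by linarith [norm_add_sq_le (ψ (p.1, p.2) - ψ (q.1, p.2)) (ψ (q.1, p.2) - ψ (q.1, q.2))]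

theorem sum_row_le_sum_energyDensity {lo₁ hi₁ lo₂ hi₂ : ℤ} {B : Finset ℤ} (hB : B ⊆ Ico lo₂ hi₂) :
    ∑ y ∈ B, ∑ x ∈ Ico lo₁ hi₁, ‖ψ (x + 1, y) - ψ (x, y)‖ ^ 2 ≤
      ∑ v ∈ Ico lo₁ hi₁ ×ˢ Ico lo₂ hi₂, energyDensity ψ v := by
  rw [sum_product_right]
  refine (sum_le_sum_of_subset_of_nonneg hB fun _ _ _ => by positivity).trans ?_
  gcongr with y _ x _
  exact le_add_of_nonneg_right (sq_nonneg _)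

theorem sum_col_le_sum_energyDensity {lo₁ hi₁ lo₂ hi₂ : ℤ} {A : Finset ℤ} (hA : A ⊆ Ico lo₁ hi₁) :
    ∑ x ∈ A, ∑ y ∈ Ico lo₂ hi₂, ‖ψ (x, y + 1) - ψ (x, y)‖ ^ 2 ≤
      ∑ v ∈ Ico lo₁ hi₁ ×ˢ Ico lo₂ hi₂, energyDensity ψ v := by
  rw [sum_product]
  refine (sum_le_sum_of_subset_of_nonneg hA fun _ _ _ => by positivity).trans ?_
  gcongr with x _ y _
  exact le_add_of_nonneg_left (sq_nonneg _)

theorem norm_expect_sub_expect_sq_le_sum_energyDensity {lo₁ hi₁ lo₂ hi₂ : ℤ}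
    {A B A' B' : Finset ℤ} (hA : A ⊆ Ico lo₁ hi₁) (hB : B ⊆ Ico lo₂ hi₂)
    (hA' : A' ⊆ Ico lo₁ hi₁) (hB' : B' ⊆ Ico lo₂ hi₂) (hAne : A.Nonempty) (hBne : B.Nonempty)
    (hA'ne : A'.Nonempty) (hB'ne : B'.Nonempty) :
    ‖𝔼 p ∈ A ×ˢ B, ψ p - 𝔼 q ∈ A' ×ˢ B', ψ q‖ ^ 2 ≤
      (2 * (hi₁ - lo₁) / #B + 2 * (hi₂ - lo₂) / #A') *
        ∑ v ∈ Ico lo₁ hi₁ ×ˢ Ico lo₂ hi₂, energyDensity ψ v := by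
  set E := ∑ v ∈ Ico lo₁ hi₁ ×ˢ Ico lo₂ hi₂, energyDensity ψ v
  set Row : ℤ → ℝ := fun y => ∑ x ∈ Ico lo₁ hi₁, ‖ψ (x + 1, y) - ψ (x, y)‖ ^ 2
  set Col : ℤ → ℝ := fun x => ∑ y ∈ Ico lo₂ hi₂, ‖ψ (x, y + 1) - ψ (x, y)‖ ^ 2
  have hIcc {a lo hi : ℤ} {S : Finset ℤ} (hS : S ⊆ Ico lo hi) (ha : a ∈ S) : a ∈ Icc lo hi :=
    Ico_subset_Icc_self (hS ha)
  have hpath : ∀ v ∈ (A ×ˢ B) ×ˢ (A' ×ˢ B'), ‖ψ v.1 - ψ v.2‖ ^ 2 ≤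
      2 * (hi₁ - lo₁) * Row v.1.2 + 2 * (hi₂ - lo₂) * Col v.2.1 := by
    simp only [mem_product]
    rintro ⟨p, q⟩ ⟨⟨hp₁, hp₂⟩, hq₁, hq₂⟩
    exact norm_sub_sq_le_row_add_col ψ (hIcc hA hp₁) (hIcc hA' hq₁) (hIcc hB hp₂) (hIcc hB' hq₂)
  calc ‖𝔼 p ∈ A ×ˢ B, ψ p - 𝔼 q ∈ A' ×ˢ B', ψ q‖ ^ 2
      ≤ 𝔼 v ∈ (A ×ˢ B) ×ˢ (A' ×ˢ B'), ‖ψ v.1 - ψ v.2‖ ^ 2 :=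
        norm_expect_sub_expect_sq_le (hAne.product hBne) (hA'ne.product hB'ne) ψ ψ
    _ ≤ 𝔼 v ∈ (A ×ˢ B) ×ˢ (A' ×ˢ B'), (2 * (hi₁ - lo₁) * Row v.1.2 + 2 * (hi₂ - lo₂) * Col v.2.1) :=
        expect_le_expect hpath
    _ = 2 * (hi₁ - lo₁) * (𝔼 y ∈ B, Row y) + 2 * (hi₂ - lo₂) * 𝔼 x ∈ A', Col x := by
        rw [expect_add_distrib, ← mul_expect, ← mul_expect]
        simp [expect_product, hAne, hBne, hA'ne, hB'ne]
    _ ≤ 2 * (hi₁ - lo₁) * (E / #B) + 2 * (hi₂ - lo₂) * (E / #A') := by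
        obtain ⟨a, ha⟩ := hAne
        obtain ⟨b, hb⟩ := hBne
        have hW : (0 : ℝ) ≤ hi₁ - lo₁ :=
          sub_nonneg.2 (Int.cast_le.2 (by have := mem_Ico.1 (hA ha); omega))
        have hH : (0 : ℝ) ≤ hi₂ - lo₂ :=
          sub_nonneg.2 (Int.cast_le.2 (by have := mem_Ico.1 (hB hb); omega))
        rw [expect_eq_sum_div_card, expect_eq_sum_div_card]
        gcongr
        exacts [sum_row_le_sum_energyDensity ψ hB, sum_col_le_sum_energyDensity ψ hA']
    _ = _ := by ring

/-- The square of side `2 ^ k` with lower left corner `w + (2 ^ k - 1, 0)`. It is `{w}` for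
`k = 0`, the squares `k` and `k + 1` lie in `dyadicBlock w k`, and blocks `k` and `k + 2` are
disjoint. -/
noncomputable def dyadicSquare (w : ℤ × ℤ) (k : ℕ) : Finset (ℤ × ℤ) :=
  Ico (w.1 + 2 ^ k - 1) (w.1 + 2 ^ (k + 1) - 1) ×ˢ Ico w.2 (w.2 + 2 ^ k)

noncomputable def dyadicBlock (w : ℤ × ℤ) (k : ℕ) : Finset (ℤ × ℤ) :=
  Ico (w.1 + 2 ^ k - 1) (w.1 + 2 ^ (k + 2) - 1) ×ˢ Ico w.2 (w.2 + 2 ^ (k + 1))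

theorem expect_dyadicSquare_zero (w : ℤ × ℤ) : 𝔼 p ∈ dyadicSquare w 0, ψ p = ψ w := by
  simp only [dyadicSquare, pow_zero, zero_add, pow_one, add_sub_cancel_right,
    show w.1 + 2 - 1 = w.1 + 1 by ring, Ico_add_one_right_eq_Icc, Icc_self]
  simp

theorem norm_expect_dyadicSquare_sub_succ_sq_le (w : ℤ × ℤ) (k : ℕ) :
    ‖𝔼 p ∈ dyadicSquare w k, ψ p - 𝔼 p ∈ dyadicSquare w (k + 1), ψ p‖ ^ 2 ≤
      8 * ∑ v ∈ dyadicBlock w k, energyDensity ψ v := by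
  have hs : (0 : ℤ) < 2 ^ k := by positivity
  unfold dyadicSquare dyadicBlock
  simp only [pow_succ]
  generalize (2 : ℤ) ^ k = s at hs ⊢
  refine (norm_expect_sub_expect_sq_le_sum_energyDensity ψ (Ico_subset_Ico le_rfl (by omega))
    (Ico_subset_Ico le_rfl (by omega)) (Ico_subset_Ico (by omega) le_rfl) subset_rfl
    (nonempty_Ico.2 (by omega)) (nonempty_Ico.2 (by omega)) (nonempty_Ico.2 (by omega))
    (nonempty_Ico.2 (by omega))).trans_eq ?_
  rw [Int.natCast_card_Ico (by omega), Int.natCast_card_Ico (by omega)]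
  congr 1
  have : (s : ℝ) ≠ 0 := by positivity
  push_cast
  ring_nf
  field_simp

theorem norm_expect_dyadicSquare_sub_sq_le (hψ : Summable (energyDensity ψ)) {w z : ℤ × ℤ}
    {K : ℕ} (h₁ : |z.1 - w.1| ≤ 2 ^ K) (h₂ : |z.2 - w.2| ≤ 2 ^ K) :
    ‖𝔼 p ∈ dyadicSquare w K, ψ p - 𝔼 p ∈ dyadicSquare z K, ψ p‖ ^ 2 ≤
      8 * dirichletEnergy ψ := by
  have hs : (0 : ℤ) < 2 ^ K := by positivity
  rw [abs_le] at h₁ h₂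
  unfold dyadicSquare
  simp only [pow_succ]
  generalize (2 : ℤ) ^ K = s at hs h₁ h₂ ⊢
  calc _ ≤ 8 * ∑ v ∈ Ico (min w.1 z.1 + s - 1) (min w.1 z.1 + 3 * s - 1) ×ˢ
          Ico (min w.2 z.2) (min w.2 z.2 + 2 * s), energyDensity ψ v := by
        refine (norm_expect_sub_expect_sq_le_sum_energyDensity ψ (lo₁ := min w.1 z.1 + s - 1)
          (hi₁ := min w.1 z.1 + 3 * s - 1) (lo₂ := min w.2 z.2) (hi₂ := min w.2 z.2 + 2 * s)
          (Ico_subset_Ico (by omega) (by omega)) (Ico_subset_Ico (by omega) (by omega))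
          (Ico_subset_Ico (by omega) (by omega)) (Ico_subset_Ico (by omega) (by omega))
          (nonempty_Ico.2 (by omega)) (nonempty_Ico.2 (by omega)) (nonempty_Ico.2 (by omega))
          (nonempty_Ico.2 (by omega))).trans_eq ?_
        rw [Int.natCast_card_Ico (by omega), Int.natCast_card_Ico (by omega)]
        congr 1
        have : (s : ℝ) ≠ 0 := by positivity
        push_cast
        ring_nf
        field_simp
    _ ≤ 8 * dirichletEnergy ψ := by gcongr; exact sum_energyDensity_le_dirichletEnergy ψ hψ _

theorem disjoint_dyadicBlock (w : ℤ × ℤ) {i j : ℕ} (hij : i + 2 ≤ j) :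
    Disjoint (dyadicBlock w i) (dyadicBlock w j) := by
  have : (2 : ℤ) ^ (i + 2) ≤ 2 ^ j := pow_le_pow_right₀ (by norm_num) hij
  refine disjoint_product.2 (Or.inl (disjoint_left.2 fun x hi hj => ?_))
  rw [mem_Ico] at hi hj
  omega

theorem norm_sub_expect_dyadicSquare_sq_le (hψ : Summable (energyDensity ψ)) (w : ℤ × ℤ)
    (K : ℕ) : ‖ψ w - 𝔼 p ∈ dyadicSquare w K, ψ p‖ ^ 2 ≤ 16 * K * dirichletEnergy ψ := by
  set a : ℕ → ℂ := fun k => 𝔼 p ∈ dyadicSquare w k, ψ p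
  have htele : ψ w - a K = ∑ k ∈ range K, (a k - a (k + 1)) := by
    rw [sum_range_sub', ← expect_dyadicSquare_zero ψ w]
  have hblocks : ∑ k ∈ range K, ∑ v ∈ dyadicBlock w k, energyDensity ψ v ≤
      2 * dirichletEnergy ψ :=
    sum_sum_le_two_mul_tsum (energyDensity_nonneg ψ) hψ (fun _ _ => disjoint_dyadicBlock w) K
  calc ‖ψ w - a K‖ ^ 2 ≤ K * ∑ k ∈ range K, ‖a k - a (k + 1)‖ ^ 2 := by
        simpa [htele] using norm_sum_sq_le_card_mul (range K) fun k => a k - a (k + 1)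
    _ ≤ K * ∑ k ∈ range K, 8 * ∑ v ∈ dyadicBlock w k, energyDensity ψ v := by
        gcongr with k
        exact norm_expect_dyadicSquare_sub_succ_sq_le ψ w k
    _ ≤ K * (8 * (2 * dirichletEnergy ψ)) := by rw [← mul_sum]; gcongr
    _ = 16 * K * dirichletEnergy ψ := by ring

theorem norm_sub_sq_le_of_abs_le_two_pow (hψ : Summable (energyDensity ψ)) {w z : ℤ × ℤ}
    {K : ℕ} (h₁ : |z.1 - w.1| ≤ 2 ^ K) (h₂ : |z.2 - w.2| ≤ 2 ^ K) :
    ‖ψ z - ψ w‖ ^ 2 ≤ (96 * K + 24) * dirichletEnergy ψ := by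
  set a := fun u => 𝔼 p ∈ dyadicSquare u K, ψ p
  have hz := norm_sub_expect_dyadicSquare_sq_le ψ hψ z K
  have hw := norm_sub_expect_dyadicSquare_sq_le ψ hψ w K
  have hzw : ‖a w - a z‖ ^ 2 ≤ 8 * dirichletEnergy ψ :=
    norm_expect_dyadicSquare_sub_sq_le ψ hψ h₁ h₂
  rw [norm_sub_rev] at hw hzw
  calc ‖ψ z - ψ w‖ ^ 2 = ‖(ψ z - a z) + (a z - a w) + (a w - ψ w)‖ ^ 2 := by
        congr 2; abel
    _ ≤ 3 * (‖ψ z - a z‖ ^ 2 + ‖a z - a w‖ ^ 2 + ‖a w - ψ w‖ ^ 2) := norm_add₃_sq_le _ _ _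
    _ ≤ _ := by linarith

theorem norm_sub_sq_le_log_mul_dirichletEnergy (hψ : Summable (energyDensity ψ)) (z : ℤ × ℤ) :
    ‖ψ z - ψ 0‖ ^ 2 ≤ 320 * Real.log (2 + normZ2 z) * dirichletEnergy ψ := by
  set r := normZ2 z
  have hr : 0 ≤ r := Real.sqrt_nonneg _
  obtain ⟨K, hrK, hK⟩ := exists_two_pow_between hr
  have habs₁ : |(z.1 : ℝ)| ≤ 2 ^ K := (Real.abs_le_sqrt (by nlinarith)).trans hrK
  have habs₂ : |(z.2 : ℝ)| ≤ 2 ^ K := (Real.abs_le_sqrt (by nlinarith)).trans hrK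
  have hψz := norm_sub_sq_le_of_abs_le_two_pow ψ hψ (w := 0) (z := z) (K := K)
    (by simpa using (by exact_mod_cast habs₁ : |z.1| ≤ (2 : ℤ) ^ K))
    (by simpa using (by exact_mod_cast habs₂ : |z.2| ≤ (2 : ℤ) ^ K))
  have hlog2 := Real.log_two_gt_d9
  have hL : Real.log 2 ≤ Real.log (2 + r) := Real.log_le_log two_pos (by linarith)
  have hKL : K * Real.log 2 ≤ 2 * Real.log (2 + r) := by
    rw [← Real.log_pow, ← Real.log_rpow (by linarith), Real.rpow_two]
    exact Real.log_le_log (by positivity) (by nlinarith)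
  have hK320 : 96 * K + 24 ≤ 320 * Real.log (2 + r) := by nlinarith
  exact hψz.trans (by gcongr; exact tsum_nonneg (energyDensity_nonneg ψ))

end

section

variable (φ ψ : ℤ × ℤ → ℂ)

noncomputable def gradInner (x : ℤ × ℤ) : ℂ :=
  conj (φ (x.1 + 1, x.2) - φ x) * (ψ (x.1 + 1, x.2) - ψ x) +
    conj (φ (x.1, x.2 + 1) - φ x) * (ψ (x.1, x.2 + 1) - ψ x)

noncomputable def dirichletInner : ℂ := ∑' x, gradInner φ ψ x

theorem gradInner_self (x : ℤ × ℤ) : gradInner ψ ψ x = energyDensity ψ x := by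
  rw [gradInner, Complex.conj_mul', Complex.conj_mul', energyDensity]
  push_cast; rfl

theorem finite_support_gradInner {φ : ℤ × ℤ → ℂ} (hφ : (support φ).Finite) :
    (support (gradInner φ ψ)).Finite := by
  have hinj₁ : Function.Injective fun x : ℤ × ℤ => (x.1 + 1, x.2) := fun x y h => by
    simp only [Prod.mk.injEq, add_left_inj] at h; exact Prod.ext h.1 h.2
  have hinj₂ : Function.Injective fun x : ℤ × ℤ => (x.1, x.2 + 1) := fun x y h => by
    simp only [Prod.mk.injEq, add_left_inj] at h; exact Prod.ext h.1 h.2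
  refine ((hφ.union (hφ.preimage hinj₁.injOn)).union (hφ.preimage hinj₂.injOn)).subset ?_
  intro x hx
  contrapose! hx
  simp_all [gradInner]

theorem summable_energyDensity {ψ : ℤ × ℤ → ℂ} (hψ : (support ψ).Finite) :
    Summable (energyDensity ψ) := by
  refine summable_of_hasFiniteSupport ((finite_support_gradInner ψ hψ).subset fun x hx => ?_)
  simpa [gradInner_self] using hx

theorem dirichletInner_self : dirichletInner ψ ψ = dirichletEnergy ψ := by
  simp [dirichletInner, dirichletEnergy, gradInner_self, Complex.ofReal_tsum]

theorem conj_dirichletInner : conj (dirichletInner φ ψ) = dirichletInner ψ φ := by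
  rw [dirichletInner, dirichletInner, Complex.conj_tsum]
  refine tsum_congr fun x => ?_
  simp only [gradInner, map_add, map_mul, Complex.conj_conj]
  ring

theorem dirichletInner_smul_left (c : ℂ) :
    dirichletInner (c • φ) ψ = conj c * dirichletInner φ ψ := by
  rw [dirichletInner, dirichletInner, ← tsum_mul_left]
  refine tsum_congr fun x => ?_
  simp only [gradInner, Pi.smul_apply, smul_eq_mul, ← mul_sub, map_mul]
  ring

theorem dirichletInner_add_left {φ χ : ℤ × ℤ → ℂ} (hφ : (support φ).Finite)
    (hχ : (support χ).Finite) :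
    dirichletInner (φ + χ) ψ = dirichletInner φ ψ + dirichletInner χ ψ := by
  rw [dirichletInner, dirichletInner, dirichletInner,
    ← (summable_of_hasFiniteSupport (finite_support_gradInner ψ hφ)).tsum_add
      (summable_of_hasFiniteSupport (finite_support_gradInner ψ hχ))]
  refine tsum_congr fun x => ?_
  simp only [gradInner, Pi.add_apply, add_sub_add_comm, map_add]
  ring

end

noncomputable abbrev dirichletCore (E : Submodule ℂ (ℤ × ℤ → ℂ))
    (hfin : ∀ ψ ∈ E, (support ψ).Finite) (h0 : ∀ ψ ∈ E, ψ 0 = 0) :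
    InnerProductSpace.Core ℂ E where
  inner ψ φ := dirichletInner ψ φ
  conj_inner_symm ψ φ := conj_dirichletInner φ ψ
  re_inner_nonneg ψ := by
    simp only [dirichletInner_self]
    exact tsum_nonneg (energyDensity_nonneg _)
  add_left ψ φ χ := dirichletInner_add_left _ (hfin ψ ψ.2) (hfin φ φ.2)
  smul_left ψ φ c := dirichletInner_smul_left _ _ c
  definite ψ hψ := by
    have hD : dirichletEnergy ψ = 0 := by exact_mod_cast (dirichletInner_self ψ).symm.trans hψ
    refine Subtype.ext (funext fun z => ?_)
    have := norm_sub_sq_le_log_mul_dirichletEnergy ψ (summable_energyDensity (hfin ψ ψ.2)) z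
    rw [hD, mul_zero, h0 ψ ψ.2, sub_zero] at this
    simpa using this

theorem finrank_le_tsum_of_dirichletEnergy_le (E : Submodule ℂ (ℤ × ℤ → ℂ)) [FiniteDimensional ℂ E]
    (hfin : ∀ ψ ∈ E, (support ψ).Finite) (h0 : ∀ ψ ∈ E, ψ 0 = 0) {V : ℤ × ℤ → ℝ}
    (hV : ∀ x, 0 ≤ V x)
    (hle : ∀ ψ ∈ E, ENNReal.ofReal (dirichletEnergy ψ) ≤ ∑' x, ENNReal.ofReal (V x * ‖ψ x‖ ^ 2)) :
    (Module.finrank ℂ E : ℝ≥0∞) ≤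
      ∑' x, ENNReal.ofReal (320 * Real.log (2 + normZ2 x) * V x) := by
  let core := dirichletCore E hfin h0
  let _ := core.toNormedAddCommGroup
  let _ := InnerProductSpace.ofCore core.toCore
  have hnorm : ∀ ψ : E, ‖ψ‖ ^ 2 = dirichletEnergy ψ := fun ψ => by
    rw [@norm_sq_eq_re_inner ℂ]
    exact congrArg Complex.re (dirichletInner_self ψ)
  refine finrank_le_tsum_of_sq_norm_le E.subtype hV (fun x => ?_) (fun ψ x => ?_) (fun ψ => ?_)
  · have : 0 ≤ normZ2 x := Real.sqrt_nonneg _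
    have := Real.log_nonneg (by linarith : (1 : ℝ) ≤ 2 + normZ2 x)
    positivity
  · simpa [h0 ψ ψ.2, hnorm] using
      norm_sub_sq_le_log_mul_dirichletEnergy ψ (summable_energyDensity (hfin ψ ψ.2)) x
  · rw [hnorm]; exact hle ψ ψ.2

theorem ofReal_dirichletEnergy_le_of_latticeForm2D_nonpos {V : ℤ × ℤ → ℝ} (hV : ∀ x, 0 ≤ V x)
    {ψ : ℤ × ℤ → ℂ} (hψ : (support ψ).Finite) (hQ : latticeForm2D V ψ ≤ 0) :
    ENNReal.ofReal (dirichletEnergy ψ) ≤ ∑' x, ENNReal.ofReal (V x * ‖ψ x‖ ^ 2) := by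
  have hsum : Summable fun x => V x * ‖ψ x‖ ^ 2 :=
    summable_of_hasFiniteSupport
      (hψ.subset ((support_mul_subset_right _ _).trans fun x hx => by simpa using hx))
  rw [← ENNReal.ofReal_tsum_of_nonneg (fun x => mul_nonneg (hV x) (sq_nonneg _)) hsum]
  rw [latticeForm2D_eq] at hQ
  exact ENNReal.ofReal_le_ofReal (by linarith)

end LatticeZ2

open LatticeZ2 in
/-- Bargmann-type estimate for the two-dimensional lattice Schrödinger operator
(Theorem 4.1), in variational form. -/
theorem bargmann_estimate_lattice_2d :
    ∃ C : ℝ, 0 < C ∧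
      ∀ (V : ℤ × ℤ → ℝ), (∀ x, 0 ≤ V x) →
      ∀ (M : Submodule ℂ (ℤ × ℤ → ℂ)), FiniteDimensional ℂ M →
      (∀ ψ ∈ M, (Function.support ψ).Finite) →
      (∀ ψ ∈ M, ψ ≠ 0 → latticeForm2D V ψ < 0) →
      (Module.finrank ℂ M : ℝ≥0∞) ≤
        ENNReal.ofReal C * (∑' x : ℤ × ℤ, ENNReal.ofReal (Real.log (2 + normZ2 x) * V x)) + 1 := by
  refine ⟨320, by norm_num, fun V hV M _ hfin hneg => ?_⟩
  set E := M ⊓ LinearMap.ker (LinearMap.proj (0 : ℤ × ℤ) : (ℤ × ℤ → ℂ) →ₗ[ℂ] ℂ)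
  have hmem : ∀ ψ ∈ E, ψ ∈ M ∧ ψ 0 = 0 := fun ψ hψ => by simpa [E] using hψ
  have hE := finrank_le_tsum_of_dirichletEnergy_le E (fun ψ hψ => hfin ψ (hmem ψ hψ).1)
    (fun ψ hψ => (hmem ψ hψ).2) hV fun ψ hψ => by
      refine ofReal_dirichletEnergy_le_of_latticeForm2D_nonpos hV (hfin ψ (hmem ψ hψ).1) ?_
      rcases eq_or_ne ψ 0 with rfl | hψ0
      · simp [latticeForm2D]
      · exact (hneg ψ (hmem ψ hψ).1 hψ0).le
  simp only [mul_assoc, ENNReal.ofReal_mul (show (0 : ℝ) ≤ 320 by norm_num),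
    ENNReal.tsum_mul_left] at hE
  calc (Module.finrank ℂ M : ℝ≥0∞) ≤ Module.finrank ℂ E + 1 := by
        exact_mod_cast M.finrank_le_finrank_inf_ker_add_one _
    _ ≤ _ := add_le_add_left hE 1
end

section
/- There exists a constant C > 0 such that for every x ∈ ℤ², (1/(2π)²) ∫_{[−π,π]²} (1 − cos(x·φ)) / (4 sin²(φ₁/2) + 4 sin²(φ₂/2)) dφ ≤ C ln(2+|x|). -/
/-!
On `[-π, π]²` Jordan's inequality gives `4 sin²(φ₁/2) + 4 sin²(φ₂/2) ≥ (4/π²) |φ|²`, while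
`1 - cos (x·φ) ≤ min (2, |x|² |φ|² / 2)`. Together they bound the integrand by
`π² / (c² + |φ|²)` with `c = 2 / (1 + |x|)`. Integrating first in `φ₂` over all of `ℝ`
gives at most `π³ / √(c² + φ₁²)`, whose integral over `[-π, π]` is
`2π³ arsinh (π / c) = O(log (2 + |x|))`.
-/

open MeasureTheory

open Real

lemma inv_sq_add_sq_eq_inv_sq_mul {b : ℝ} (hb : b ≠ 0) (y : ℝ) :
    (b ^ 2 + y ^ 2)⁻¹ = (b ^ 2)⁻¹ * (1 + (y / b) ^ 2)⁻¹ := by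
  field_simp

lemma integrable_inv_sq_add_sq {b : ℝ} (hb : b ≠ 0) :
    Integrable fun y : ℝ => (b ^ 2 + y ^ 2)⁻¹ := by
  simp only [inv_sq_add_sq_eq_inv_sq_mul hb]
  exact (integrable_inv_one_add_sq.comp_div hb).const_mul _

lemma integral_univ_inv_sq_add_sq {b : ℝ} (hb : 0 < b) :
    ∫ y : ℝ, (b ^ 2 + y ^ 2)⁻¹ = π / b := by
  simp only [inv_sq_add_sq_eq_inv_sq_mul hb.ne']
  rw [integral_const_mul, Measure.integral_comp_div (fun y => (1 + y ^ 2)⁻¹),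
    integral_univ_inv_one_add_sq, abs_of_pos hb, smul_eq_mul]
  field_simp

lemma setIntegral_inv_sq_add_sq_le {b : ℝ} (hb : 0 < b) (s : Set ℝ) :
    ∫ y in s, (b ^ 2 + y ^ 2)⁻¹ ≤ π / b :=
  integral_univ_inv_sq_add_sq hb ▸
    setIntegral_le_integral (integrable_inv_sq_add_sq hb.ne') (.of_forall fun _ => by positivity)

lemma hasDerivAt_arsinh_div {c : ℝ} (hc : 0 < c) (a : ℝ) :
    HasDerivAt (fun a => arsinh (a / c)) (√(c ^ 2 + a ^ 2))⁻¹ a := by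
  have h := ((hasDerivAt_id a).div_const c).arsinh
  have : √(c ^ 2 + a ^ 2) = √(1 + (a / c) ^ 2) * c := by
    rw [← sqrt_sq hc.le, ← sqrt_mul (by positivity), sqrt_sq hc.le]
    field_simp
  rw [this, mul_inv]
  simpa using h

lemma continuous_inv_sqrt_sq_add_sq {c : ℝ} (hc : c ≠ 0) :
    Continuous fun a : ℝ => (√(c ^ 2 + a ^ 2))⁻¹ :=
  (by fun_prop : Continuous fun a : ℝ => √(c ^ 2 + a ^ 2)).inv₀ fun a => by positivity

lemma integral_Icc_inv_sqrt_sq_add_sq {L c : ℝ} (hL : 0 ≤ L) (hc : 0 < c) :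
    ∫ a in Set.Icc (-L) L, (√(c ^ 2 + a ^ 2))⁻¹ = 2 * arsinh (L / c) := by
  rw [integral_Icc_eq_integral_Ioc, ← intervalIntegral.integral_of_le (by linarith),
    intervalIntegral.integral_eq_sub_of_hasDerivAt (fun a _ => hasDerivAt_arsinh_div hc a)
      ((continuous_inv_sqrt_sq_add_sq hc.ne').intervalIntegrable _ _), neg_div, arsinh_neg]
  ring

lemma arsinh_le_log_one_add_two_mul {t : ℝ} (ht : 0 ≤ t) : arsinh t ≤ log (1 + 2 * t) := by
  refine log_le_log (by positivity) ?_
  have : √(1 + t ^ 2) ≤ 1 + t := sqrt_le_iff.2 ⟨by positivity, by nlinarith⟩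
  linarith

lemma integrableOn_square_inv_sq_add_sq_add_sq (L : ℝ) {c : ℝ} (hc : c ≠ 0) :
    IntegrableOn (fun φ : ℝ × ℝ => (c ^ 2 + φ.1 ^ 2 + φ.2 ^ 2)⁻¹)
      (Set.Icc (-L) L ×ˢ Set.Icc (-L) L) := by
  rw [Set.Icc_prod_Icc]
  exact ((by fun_prop : Continuous fun φ : ℝ × ℝ => c ^ 2 + φ.1 ^ 2 + φ.2 ^ 2).inv₀
    fun φ => by positivity).integrableOn_Icc

lemma setIntegral_square_inv_sq_add_sq_add_sq_le {L c : ℝ} (hL : 0 ≤ L) (hc : 0 < c) :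
    ∫ φ : ℝ × ℝ in Set.Icc (-L) L ×ˢ Set.Icc (-L) L, (c ^ 2 + φ.1 ^ 2 + φ.2 ^ 2)⁻¹
      ≤ 2 * π * arsinh (L / c) := by
  have hint := integrableOn_square_inv_sq_add_sq_add_sq L hc.ne'
  have hinner (a : ℝ) : ∫ y in Set.Icc (-L) L, (c ^ 2 + a ^ 2 + y ^ 2)⁻¹
      ≤ π * (√(c ^ 2 + a ^ 2))⁻¹ := by
    have hb : 0 < √(c ^ 2 + a ^ 2) := sqrt_pos.2 (by positivity)
    simpa only [sq_sqrt (by positivity : 0 ≤ c ^ 2 + a ^ 2), div_eq_mul_inv] using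
      setIntegral_inv_sq_add_sq_le hb (Set.Icc (-L) L)
  rw [Measure.volume_eq_prod, setIntegral_prod _ hint]
  calc ∫ a in Set.Icc (-L) L, ∫ y in Set.Icc (-L) L, (c ^ 2 + a ^ 2 + y ^ 2)⁻¹
      ≤ ∫ a in Set.Icc (-L) L, π * (√(c ^ 2 + a ^ 2))⁻¹ := by
        refine integral_mono_of_nonneg (.of_forall fun a => integral_nonneg fun y => ?_) ?_
          (.of_forall hinner)
        · positivity
        · exact ((continuous_inv_sqrt_sq_add_sq hc.ne').integrableOn_Icc).const_mul π
    _ = 2 * π * arsinh (L / c) := by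
        rw [integral_const_mul, integral_Icc_inv_sqrt_sq_add_sq hL hc]
        ring

lemma sq_le_pi_sq_mul_sin_half_sq {u : ℝ} (hu : |u| ≤ π) : u ^ 2 ≤ π ^ 2 * sin (u / 2) ^ 2 := by
  have h := mul_abs_le_abs_sin (x := u / 2) (by rw [abs_div, abs_two]; linarith)
  have : |u| ≤ π * |sin (u / 2)| := by
    rw [abs_div, abs_two] at h
    have := pi_pos
    field_simp at h
    linarith
  calc u ^ 2 = |u| ^ 2 := (sq_abs u).symm
    _ ≤ (π * |sin (u / 2)|) ^ 2 := by gcongr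
    _ = π ^ 2 * sin (u / 2) ^ 2 := by rw [mul_pow, sq_abs]

/-- `(2 / M)²` is the scale of `|φ|²` at which the bounds `1 - cos t ≤ 2` and
`1 - cos t ≤ t² / 2` cross over. -/
lemma one_sub_cos_mul_le {p q M u v : ℝ} (hM : 0 < M) (hpq : p ^ 2 + q ^ 2 ≤ M ^ 2) :
    (1 - cos (p * u + q * v)) * ((2 / M) ^ 2 + u ^ 2 + v ^ 2) ≤ 4 * (u ^ 2 + v ^ 2) := by
  set t := p * u + q * v
  have hs0 : 0 ≤ 1 - cos t := by linarith [cos_le_one t]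
  have hs2 : 1 - cos t ≤ 2 := by linarith [neg_one_le_cos t]
  have hst : 1 - cos t ≤ M ^ 2 * (u ^ 2 + v ^ 2) / 2 := by
    have hcs : t ^ 2 ≤ (p ^ 2 + q ^ 2) * (u ^ 2 + v ^ 2) := by
      nlinarith [sq_nonneg (p * v - q * u)]
    nlinarith [one_sub_sq_div_two_le_cos (x := t), sq_nonneg u, sq_nonneg v]
  rcases le_total (u ^ 2 + v ^ 2) ((2 / M) ^ 2) with h | h
  · calc (1 - cos t) * ((2 / M) ^ 2 + u ^ 2 + v ^ 2)
        ≤ (M ^ 2 * (u ^ 2 + v ^ 2) / 2) * (2 * (2 / M) ^ 2) := by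
          gcongr
          linarith
      _ = 4 * (u ^ 2 + v ^ 2) := by field_simp; ring
  · nlinarith

lemma one_sub_cos_div_le {p q M u v : ℝ} (hM : 0 < M) (hpq : p ^ 2 + q ^ 2 ≤ M ^ 2)
    (hu : |u| ≤ π) (hv : |v| ≤ π) :
    (1 - cos (p * u + q * v)) / (4 * sin (u / 2) ^ 2 + 4 * sin (v / 2) ^ 2)
      ≤ π ^ 2 * ((2 / M) ^ 2 + u ^ 2 + v ^ 2)⁻¹ := by
  have hD : 4 * (u ^ 2 + v ^ 2) ≤ π ^ 2 * (4 * sin (u / 2) ^ 2 + 4 * sin (v / 2) ^ 2) := by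
    nlinarith [sq_le_pi_sq_mul_sin_half_sq hu, sq_le_pi_sq_mul_sin_half_sq hv]
  rcases (by positivity : 0 ≤ 4 * sin (u / 2) ^ 2 + 4 * sin (v / 2) ^ 2).eq_or_lt with h0 | hpos
  · rw [← h0, div_zero]
    positivity
  · rw [← div_eq_mul_inv, div_le_div_iff₀ hpos (by positivity)]
    linarith [one_sub_cos_mul_le (u := u) (v := v) hM hpq]

lemma setIntegral_one_sub_cos_div_le {p q M : ℝ} (hM : 0 < M) (hpq : p ^ 2 + q ^ 2 ≤ M ^ 2) :
    ∫ φ : ℝ × ℝ in Set.Icc (-π) π ×ˢ Set.Icc (-π) π,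
        (1 - cos (p * φ.1 + q * φ.2)) / (4 * sin (φ.1 / 2) ^ 2 + 4 * sin (φ.2 / 2) ^ 2)
      ≤ 2 * π ^ 3 * arsinh (π * M / 2) := by
  calc _ ≤ ∫ φ : ℝ × ℝ in Set.Icc (-π) π ×ˢ Set.Icc (-π) π,
          π ^ 2 * ((2 / M) ^ 2 + φ.1 ^ 2 + φ.2 ^ 2)⁻¹ := by
        refine integral_mono_of_nonneg (.of_forall fun φ => ?_) ?_ ?_
        · have := cos_le_one (p * φ.1 + q * φ.2)
          exact div_nonneg (by linarith) (by positivity)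
        · exact (integrableOn_square_inv_sq_add_sq_add_sq π (by positivity)).const_mul _
        · exact (ae_restrict_iff' (measurableSet_Icc.prod measurableSet_Icc)).2 <|
            .of_forall fun φ hφ => one_sub_cos_div_le hM hpq (abs_le.2 hφ.1) (abs_le.2 hφ.2)
    _ ≤ π ^ 2 * (2 * π * arsinh (π / (2 / M))) := by
        rw [integral_const_mul]
        gcongr
        exact setIntegral_square_inv_sq_add_sq_add_sq_le pi_pos.le (by positivity)
    _ = 2 * π ^ 3 * arsinh (π * M / 2) := by
        rw [div_div_eq_mul_div]
        ring

/-- The key resolvent estimate for the two-dimensional lattice Laplacian with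
Dirichlet condition at the origin:
`(1/(2π)²) ∫_{[-π,π]²} (1 - cos(x·φ)) / (4sin²(φ₁/2) + 4sin²(φ₂/2)) dφ ≤ C ln(2+|x|)`. -/
theorem lattice_resolvent_log_bound :
    ∃ C : ℝ, 0 < C ∧
      ∀ x : ℤ × ℤ,
        (1 / (2 * Real.pi) ^ 2) *
            ∫ φ : ℝ × ℝ in Set.Icc (-Real.pi) Real.pi ×ˢ Set.Icc (-Real.pi) Real.pi,
              (1 - Real.cos ((x.1 : ℝ) * φ.1 + (x.2 : ℝ) * φ.2)) /
                (4 * Real.sin (φ.1 / 2) ^ 2 + 4 * Real.sin (φ.2 / 2) ^ 2) ≤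
          C * Real.log (2 + normZ2 x) := by
  refine ⟨3 * π / 2, by positivity, fun x => ?_⟩
  -- `1 + |x|` rather than `|x|` keeps the scale `2 / (1 + |x|)` finite at `x = 0`.
  set N := normZ2 x
  have hN : 0 ≤ N := sqrt_nonneg _
  have hpq : (x.1 : ℝ) ^ 2 + (x.2 : ℝ) ^ 2 ≤ (1 + N) ^ 2 := by
    have hN2 : N ^ 2 = (x.1 : ℝ) ^ 2 + (x.2 : ℝ) ^ 2 := sq_sqrt (by positivity)
    nlinarith
  have hlog : log (1 + π * (1 + N)) ≤ 3 * log (2 + N) := by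
    rw [← Nat.cast_ofNat, ← log_pow]
    exact log_le_log (by positivity) (by nlinarith [pi_le_four])
  calc _ ≤ 1 / (2 * π) ^ 2 * (2 * π ^ 3 * arsinh (π * (1 + N) / 2)) := by
        gcongr
        exact setIntegral_one_sub_cos_div_le (by positivity) hpq
    _ ≤ 1 / (2 * π) ^ 2 * (2 * π ^ 3 * log (1 + π * (1 + N))) := by
        gcongr
        refine (arsinh_le_log_one_add_two_mul (by positivity)).trans_eq ?_
        ring_nf
    _ ≤ 3 * π / 2 * log (2 + N) := by
        have := pi_pos
        field_simp
        nlinarith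
end

section
/- Let V : ℤ → [0,∞) and ε > 0, and suppose that the series Σ_{x∈ℤ, |x|≥1} |x| V(x) / (ln(1+|x|))^{1+ε} diverges (is not summable). Then there exists a sequence (ψ_n)_{n≥1} of nonzero finitely supported functions ℤ → ℂ with pairwise disjoint supports such that Q_V(ψ_n) < 0 for every n; in particular, for every N there is an N-dimensional subspace of finitely supported functions on which Q_V is negative definite. -/
open Filter Function

/-- Equal to `1` on `[4L, 8L]`, to `0` outside `(3L, 9L)`, linear of slope `±1/L` in between. -/
noncomputable def trapezoid (L t : ℝ) : ℝ := max 0 (min 1 ((3 * L - |t - 6 * L|) / L))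

section Trapezoid

variable {L : ℝ}

lemma trapezoid_eq_zero (hL : 0 < L) {t : ℝ} (h : 3 * L ≤ |t - 6 * L|) : trapezoid L t = 0 :=
  max_eq_left <| (min_le_right _ _).trans <| div_nonpos_of_nonpos_of_nonneg (by linarith) hL.le

lemma trapezoid_eq_one (hL : 0 < L) {t : ℝ} (h : |t - 6 * L| ≤ 2 * L) : trapezoid L t = 1 := by
  have : 1 ≤ (3 * L - |t - 6 * L|) / L := by rw [le_div_iff₀ hL]; linarith
  rw [trapezoid, min_eq_left this, max_eq_right zero_le_one]

lemma abs_trapezoid_sub_le (hL : 0 < L) (s t : ℝ) :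
    |trapezoid L s - trapezoid L t| ≤ |s - t| / L := by
  have hlin : |(3 * L - |s - 6 * L|) / L - (3 * L - |t - 6 * L|) / L| ≤ |s - t| / L := by
    rw [← sub_div, abs_div, abs_of_pos hL]
    refine div_le_div_of_nonneg_right ?_ hL.le
    calc |3 * L - |s - 6 * L| - (3 * L - |t - 6 * L|)| = |(|t - 6 * L| - |s - 6 * L|)| := by
          ring_nf
      _ ≤ |t - 6 * L - (s - 6 * L)| := abs_abs_sub_abs_le_abs_sub _ _
      _ = |s - t| := by rw [abs_sub_comm]; ring_nf
  calc |trapezoid L s - trapezoid L t|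
      ≤ |min 1 ((3 * L - |s - 6 * L|) / L) - min 1 ((3 * L - |t - 6 * L|) / L)| := by
        simpa only [trapezoid, max_comm (0 : ℝ)] using abs_max_sub_max_le_abs _ _ (0 : ℝ)
    _ ≤ |s - t| / L :=
        (abs_min_sub_min_le_max _ _ _ _).trans
          (max_le (by simp only [sub_self, abs_zero]; positivity) hlin)

end Trapezoid

-- Since `Nat.log 2 0 = 0`, shell `0` is `{-1, 0, 1}`; shell `k ≠ 0` is `2 ^ k ≤ |x| < 2 ^ (k + 1)`.
def dyadicShell (k : ℕ) : Set ℤ := {x | Nat.log 2 x.natAbs = k}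

section DyadicShell

variable {k : ℕ} {x : ℤ}

lemma abs_lt_of_mem_dyadicShell (hx : x ∈ dyadicShell k) : |x| < 2 ^ (k + 1) := by
  have h := Nat.lt_pow_succ_log_self one_lt_two x.natAbs
  rw [show Nat.log 2 x.natAbs = k from hx] at h
  rw [Int.abs_eq_natAbs]
  exact_mod_cast h

lemma le_abs_of_mem_dyadicShell (hk : k ≠ 0) (hx : x ∈ dyadicShell k) : 2 ^ k ≤ |x| := by
  have hx0 : x.natAbs ≠ 0 := fun h0 => hk (by rw [← show Nat.log 2 x.natAbs = k from hx, h0]; rfl)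
  have h := Nat.pow_log_le_self 2 hx0
  rw [show Nat.log 2 x.natAbs = k from hx] at h
  rw [Int.abs_eq_natAbs]
  exact_mod_cast h

lemma dyadicShell_finite (k : ℕ) : (dyadicShell k).Finite :=
  (Set.finite_Ioo (-2 ^ (k + 1) : ℤ) (2 ^ (k + 1))).subset fun _ hx =>
    abs_lt.mp (abs_lt_of_mem_dyadicShell hx)

instance (k : ℕ) : Finite (dyadicShell k) := (dyadicShell_finite k).to_subtype

lemma div_log_rpow_le_of_mem_dyadicShell {p : ℝ} (hp : 0 ≤ p) (hk : k ≠ 0)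
    (hx : x ∈ dyadicShell k) :
    |(x : ℝ)| / Real.log (1 + |(x : ℝ)|) ^ p ≤ 2 ^ (k + 1) / (k * Real.log 2) ^ p := by
  have hlow : (2 : ℝ) ^ k ≤ |(x : ℝ)| := by
    exact_mod_cast le_abs_of_mem_dyadicShell hk hx
  have hup : |(x : ℝ)| ≤ 2 ^ (k + 1) := by
    exact_mod_cast (abs_lt_of_mem_dyadicShell hx).le
  have hlog : k * Real.log 2 ≤ Real.log (1 + |(x : ℝ)|) := by
    rw [← Real.log_pow]
    exact Real.log_le_log (by positivity) (by linarith)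
  have hk0 : 0 < k * Real.log 2 :=
    mul_pos (by exact_mod_cast Nat.pos_of_ne_zero hk) (Real.log_pos one_lt_two)
  exact div_le_div₀ (by positivity) hup (Real.rpow_pos_of_pos hk0 p)
    (Real.rpow_le_rpow hk0.le hlog hp)

end DyadicShell

theorem summable_of_tsum_dyadicShell_le {V : ℤ → ℝ} (hV0 : ∀ x, 0 ≤ V x) {p : ℝ} (hp : 1 < p)
    {C : ℝ} (hC : ∀ᶠ k in atTop, ∑' x : dyadicShell k, V x ≤ C / 2 ^ k) :
    Summable fun x : ℤ => |(x : ℝ)| * V x / Real.log (1 + |(x : ℝ)|) ^ p := by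
  have hf0 : 0 ≤ fun x : ℤ => |(x : ℝ)| * V x / Real.log (1 + |(x : ℝ)|) ^ p := fun x =>
    div_nonneg (mul_nonneg (abs_nonneg _) (hV0 x))
      (Real.rpow_nonneg (Real.log_nonneg (by linarith [abs_nonneg (x : ℝ)])) _)
  rw [summable_partition hf0 (s := dyadicShell) fun x => ⟨_, rfl, fun _ hk => hk.symm⟩]
  refine ⟨fun _ => .of_finite, ?_⟩
  refine Summable.of_norm_bounded_eventually_nat
    ((Real.summable_nat_rpow_inv.mpr hp).mul_left (2 * C / Real.log 2 ^ p)) ?_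
  filter_upwards [hC, eventually_ne_atTop 0] with k hk hk0
  have hw : 0 ≤ (2 : ℝ) ^ (k + 1) / (k * Real.log 2) ^ p := by positivity
  rw [Real.norm_of_nonneg (tsum_nonneg fun x : dyadicShell k => hf0 x)]
  calc ∑' x : dyadicShell k, |((x : ℤ) : ℝ)| * V x / Real.log (1 + |((x : ℤ) : ℝ)|) ^ p
      ≤ ∑' x : dyadicShell k, 2 ^ (k + 1) / (k * Real.log 2) ^ p * V x := by
        refine Summable.tsum_le_tsum (fun x => ?_) .of_finite .of_finite
        rw [mul_div_right_comm]
        exact mul_le_mul_of_nonneg_right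
          (div_log_rpow_le_of_mem_dyadicShell (by linarith) hk0 x.2) (hV0 x)
    _ = 2 ^ (k + 1) / (k * Real.log 2) ^ p * ∑' x : dyadicShell k, V x := tsum_mul_left
    _ ≤ 2 ^ (k + 1) / (k * Real.log 2) ^ p * (C / 2 ^ k) := mul_le_mul_of_nonneg_left hk hw
    _ = 2 * C / Real.log 2 ^ p * ((k : ℝ) ^ p)⁻¹ := by
        rw [Real.mul_rpow (Nat.cast_nonneg k) (Real.log_pos one_lt_two).le]
        field_simp
        ring

lemma tsum_norm_sub_sq_le_card_mul {ψ : ℤ → ℂ} {s : Finset ℤ} {δ : ℝ}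
    (hs : ∀ x ∉ s, ψ (x + 1) = ψ x) (hδ : ∀ x, ‖ψ (x + 1) - ψ x‖ ≤ δ) :
    ∑' x, ‖ψ (x + 1) - ψ x‖ ^ 2 ≤ s.card * δ ^ 2 := by
  rw [tsum_eq_sum fun x hx => by rw [hs x hx, sub_self, norm_zero, sq, zero_mul], ← nsmul_eq_mul]
  exact Finset.sum_le_card_nsmul _ _ _ fun x _ => pow_le_pow_left₀ (norm_nonneg _) (hδ x) 2

lemma tsum_subtype_le_tsum_mul_norm_sq {V : ℤ → ℝ} (hV0 : ∀ x, 0 ≤ V x) {ψ : ℤ → ℂ}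
    (hψ : (support ψ).Finite) {s : Set ℤ} (hs : ∀ x ∈ s, ‖ψ x‖ = 1) :
    ∑' x : s, V x ≤ ∑' x, V x * ‖ψ x‖ ^ 2 := by
  have hsum : Summable fun x => V x * ‖ψ x‖ ^ 2 :=
    summable_of_hasFiniteSupport <| hψ.subset fun x hx h0 => hx (by simp [h0])
  calc ∑' x : s, V x = ∑' x : s, V x * ‖ψ x‖ ^ 2 :=
        tsum_congr fun x => by rw [hs x x.2, one_pow, mul_one]
    _ ≤ ∑' x, V x * ‖ψ x‖ ^ 2 :=
        hsum.tsum_subtype_le _ s fun x => mul_nonneg (hV0 x) (sq_nonneg _)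

noncomputable def tent (m : ℕ) (x : ℤ) : ℂ := trapezoid (2 ^ m) |(x : ℝ)|

section Tent

variable {m : ℕ} {x : ℤ}

lemma tent_eq_zero (h : 9 * 2 ^ m ≤ |x| ∨ |x| ≤ 3 * 2 ^ m) : tent m x = 0 := by
  rw [tent, trapezoid_eq_zero (by positivity), Complex.ofReal_zero]
  have h' : 9 * 2 ^ m ≤ |(x : ℝ)| ∨ |(x : ℝ)| ≤ 3 * 2 ^ m := by exact_mod_cast h
  rcases h' with h' | h'
  · exact le_abs.mpr (.inl (by linarith))
  · exact le_abs.mpr (.inr (by linarith))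

lemma support_tent_subset : support (tent m) ⊆ {x | 3 * 2 ^ m < |x| ∧ |x| < 9 * 2 ^ m} :=
  fun x hx => by
    by_contra h
    exact hx (tent_eq_zero (by rw [Set.mem_ofPred_eq, not_and_or, not_lt, not_lt] at h; tauto))

lemma tent_eq_one (h₁ : 4 * 2 ^ m ≤ |x|) (h₂ : |x| ≤ 8 * 2 ^ m) : tent m x = 1 := by
  have h₁' : 4 * 2 ^ m ≤ |(x : ℝ)| := by exact_mod_cast h₁
  have h₂' : |(x : ℝ)| ≤ 8 * 2 ^ m := by exact_mod_cast h₂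
  rw [tent, trapezoid_eq_one (by positivity) (abs_le.mpr ⟨by linarith, by linarith⟩),
    Complex.ofReal_one]

lemma tent_eq_one_of_mem_dyadicShell (hx : x ∈ dyadicShell (m + 2)) : tent m x = 1 :=
  tent_eq_one (by simpa [pow_add, mul_comm] using le_abs_of_mem_dyadicShell (by omega) hx)
    (by linarith [abs_lt_of_mem_dyadicShell hx, show (2 : ℤ) ^ (m + 2 + 1) = 8 * 2 ^ m by ring])

lemma tent_ne_zero (m : ℕ) : tent m ≠ 0 := fun h => by
  simpa [tent_eq_one (x := 4 * 2 ^ m) (m := m) (by simp [abs_of_pos]) (by simp [abs_of_pos])]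
    using congrFun h (4 * 2 ^ m)

lemma support_tent_finite (m : ℕ) : (support (tent m)).Finite :=
  (Set.finite_Ioo (-9 * 2 ^ m : ℤ) (9 * 2 ^ m)).subset fun _ hx =>
    Set.mem_Ioo.mpr (by simpa using abs_lt.mp (support_tent_subset hx).2)

lemma norm_tent_succ_sub_le (m : ℕ) (x : ℤ) : ‖tent m (x + 1) - tent m x‖ ≤ 1 / 2 ^ m := by
  rw [tent, tent, ← Complex.ofReal_sub, Complex.norm_real, Real.norm_eq_abs]
  refine (abs_trapezoid_sub_le (by positivity) _ _).trans
    (div_le_div_of_nonneg_right ?_ (by positivity))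
  calc |(|((x + 1 : ℤ) : ℝ)| - |(x : ℝ)|)| ≤ |((x + 1 : ℤ) : ℝ) - x| :=
        abs_abs_sub_abs_le_abs_sub _ _
    _ = 1 := by push_cast; simp

lemma kinetic_tent_le (m : ℕ) : ∑' x, ‖tent m (x + 1) - tent m x‖ ^ 2 ≤ 18 / 2 ^ m := by
  have hcard : ((Finset.Ico (-9 * 2 ^ m : ℤ) (9 * 2 ^ m)).card : ℝ) = 18 * 2 ^ m := by
    rw [Int.card_Ico, show (9 * 2 ^ m - -9 * 2 ^ m : ℤ) = ((18 * 2 ^ m : ℕ) : ℤ) by push_cast; ring,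
      Int.toNat_natCast]
    push_cast; ring
  calc ∑' x, ‖tent m (x + 1) - tent m x‖ ^ 2
      ≤ (Finset.Ico (-9 * 2 ^ m : ℤ) (9 * 2 ^ m)).card * (1 / 2 ^ m) ^ 2 := by
        refine tsum_norm_sub_sq_le_card_mul (fun x hx => ?_) (norm_tent_succ_sub_le m)
        rw [Finset.mem_Ico, not_and_or, not_le, not_lt] at hx
        rw [tent_eq_zero (.inl (le_abs.mpr ?_)), tent_eq_zero (.inl (le_abs.mpr ?_))] <;> omega
    _ = 18 / 2 ^ m := by rw [hcard]; field_simp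

end Tent

lemma latticeForm1D_tent_neg {V : ℤ → ℝ} (hV0 : ∀ x, 0 ≤ V x) {m : ℕ}
    (hm : 18 / 2 ^ m < ∑' x : dyadicShell (m + 2), V x) : latticeForm1D V (tent m) < 0 := by
  have hpot := tsum_subtype_le_tsum_mul_norm_sq hV0 (support_tent_finite m)
    fun x hx => by rw [tent_eq_one_of_mem_dyadicShell hx, norm_one]
  rw [latticeForm1D]
  linarith [kinetic_tent_le m]

lemma disjoint_support_tent {m n : ℕ} (h : m + 2 ≤ n) :
    Disjoint (support (tent m)) (support (tent n)) := by
  have h4 : 4 * 2 ^ m ≤ (2 : ℤ) ^ n := by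
    calc 4 * 2 ^ m = (2 : ℤ) ^ (m + 2) := by ring
      _ ≤ 2 ^ n := pow_le_pow_right₀ one_le_two h
  refine Set.disjoint_left.mpr fun x hm hn => ?_
  have := (support_tent_subset hm).2
  have := (support_tent_subset hn).1
  have : (0 : ℤ) < 2 ^ m := by positivity
  omega

theorem frequently_heavy_dyadicShell {V : ℤ → ℝ} (hV0 : ∀ x, 0 ≤ V x) {p : ℝ} (hp : 1 < p)
    (hdiv : ¬ Summable fun x : {x : ℤ // 1 ≤ |x|} =>
      |(x.1 : ℝ)| * V x.1 / Real.log (1 + |(x.1 : ℝ)|) ^ p) :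
    ∃ᶠ m in atTop, 18 / 2 ^ m < ∑' x : dyadicShell (m + 2), V x := by
  refine fun hlight => hdiv ?_
  obtain ⟨N, hN⟩ := eventually_atTop.mp hlight
  refine (summable_of_tsum_dyadicShell_le hV0 hp (C := 72) ?_).subtype {x | 1 ≤ |x|}
  filter_upwards [eventually_ge_atTop (N + 2)] with k hk
  obtain ⟨m, rfl⟩ : ∃ m, k = m + 2 := ⟨k - 2, by omega⟩
  calc ∑' x : dyadicShell (m + 2), V x ≤ 18 / 2 ^ m := not_lt.mp (hN m (by omega))
    _ = 72 / 2 ^ (m + 2) := by rw [pow_add]; ring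

/-- If `Σ_{|x|≥1} |x| V(x) / ln^{1+ε}(1+|x|) = ∞`, then the one-dimensional lattice
Schrödinger operator `-Δ - V` has infinitely many negative eigenvalues: there is a
sequence of nonzero finitely supported functions with pairwise disjoint supports on
which the quadratic form is negative. -/
theorem infinitely_many_negative_eigenvalues_lattice_1d
    (V : ℤ → ℝ) (hV0 : ∀ x, 0 ≤ V x) (ε : ℝ) (hε : 0 < ε)
    (hdiv : ¬ Summable fun x : {x : ℤ // 1 ≤ |x|} =>
      |(x.1 : ℝ)| * V x.1 / Real.log (1 + |(x.1 : ℝ)|) ^ (1 + ε)) :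
    ∃ ψ : ℕ → ℤ → ℂ,
      (∀ n, ψ n ≠ 0 ∧ (Function.support (ψ n)).Finite ∧ latticeForm1D V (ψ n) < 0) ∧
      ∀ m n, m ≠ n → Disjoint (Function.support (ψ m)) (Function.support (ψ n)) := by
  obtain ⟨φ, hφ, hheavy⟩ :=
    extraction_of_frequently_atTop (frequently_heavy_dyadicShell hV0 (by linarith) hdiv)
  have hgap : ∀ {a b : ℕ}, a < b → φ (2 * a) + 2 ≤ φ (2 * b) := fun {a b} hab => by
    have h₁ := hφ (show 2 * a < 2 * a + 1 by omega)
    have h₂ := hφ (show 2 * a + 1 < 2 * b by omega)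
    omega
  refine ⟨fun n => tent (φ (2 * n)), fun n => ⟨tent_ne_zero _, support_tent_finite _,
    latticeForm1D_tent_neg hV0 (hheavy _)⟩, fun a b hab => ?_⟩
  rcases hab.lt_or_gt with h | h
  · exact disjoint_support_tent (hgap h)
  · exact (disjoint_support_tent (hgap h)).symm
end

section
/- Let V : ℤ² → [0,∞) and suppose that the series Σ_{x∈ℤ²} V(x) diverges (is not summable). Then there exists a sequence (ψ_n)_{n≥1} of nonzero finitely supported functions ℤ² → ℂ with pairwise disjoint supports such that Q_V(ψ_n) < 0 for every n; in particular, for every N there is an N-dimensional subspace of finitely supported functions on which Q_V is negative definite. -/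
/-!
A radial tent in `ℤ²` that rises linearly from `0` to `1` on `r ≤ ‖x‖∞ ≤ 2r`, equals `1` up to
`ρ` and falls linearly back to `0` on `ρ ≤ ‖x‖∞ ≤ 2ρ` has Dirichlet energy at most `200`,
whatever `r` and `ρ`: each ramp has squared slope `R⁻²` on `O(R²)` sites. As `Σ V = ∞`, the
potential outside any box is still infinite, so for every `r` the plateau radius `ρ` can be chosen
so that the plateau carries more than `200` units of `V`, making `Q_V` negative on the tent.
Taking `r_{n+1} = 2ρ_n` gives tents supported in disjoint annuli.
-/

open Finset Function

theorem exists_disjoint_finset_lt_sum_of_not_summable {α : Type*} {V : α → ℝ}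
    (hV0 : ∀ x, 0 ≤ V x) (hV : ¬Summable V) (s : Finset α) (C : ℝ) :
    ∃ F : Finset α, Disjoint F s ∧ C < ∑ x ∈ F, V x := by
  classical
  by_contra! h
  refine hV (summable_of_sum_le (c := C + ∑ x ∈ s, V x) (fun x => hV0 x) fun u => ?_)
  rw [← sum_inter_add_sum_sdiff u s, add_comm]
  exact add_le_add (h _ disjoint_sdiff_self_left)
    (sum_le_sum_of_subset_of_nonneg inter_subset_right fun x _ _ => hV0 x)

theorem sum_le_tsum_mul_sq_of_eq_one {α : Type*} {V f : α → ℝ} (hV0 : ∀ x, 0 ≤ V x)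
    (hf : (support f).Finite) {F : Finset α} (hF : ∀ x ∈ F, f x = 1) :
    ∑ x ∈ F, V x ≤ ∑' x, V x * f x ^ 2 := by
  have hsum : Summable fun x => V x * f x ^ 2 :=
    summable_of_hasFiniteSupport <| hf.subset fun x hx hfx => hx (by simp [hfx])
  calc ∑ x ∈ F, V x = ∑ x ∈ F, V x * f x ^ 2 := sum_congr rfl fun x hx => by simp [hF x hx]
    _ ≤ ∑' x, V x * f x ^ 2 :=
      hsum.sum_le_tsum F fun x _ => mul_nonneg (hV0 x) (sq_nonneg _)

theorem latticeForm2D_ofReal (V : ℤ × ℤ → ℝ) (f : ℤ × ℤ → ℝ) :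
    latticeForm2D V (fun x => (f x : ℂ)) =
      (∑' x : ℤ × ℤ, ((f (x.1 + 1, x.2) - f x) ^ 2 + (f (x.1, x.2 + 1) - f x) ^ 2)) -
        ∑' x : ℤ × ℤ, V x * f x ^ 2 := by
  simp only [latticeForm2D, ← Complex.ofReal_sub, Complex.norm_real, Real.norm_eq_abs, sq_abs]

namespace LatticeSchrodinger2D

def supNorm (x : ℤ × ℤ) : ℕ := max x.1.natAbs x.2.natAbs

noncomputable def box (R : ℕ) : Finset (ℤ × ℤ) := Icc (-(R : ℤ), -(R : ℤ)) (R, R)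

theorem mem_box {R : ℕ} {x : ℤ × ℤ} : x ∈ box R ↔ supNorm x ≤ R := by
  simp only [box, mem_Icc, Prod.le_def, supNorm]
  omega

theorem card_box (R : ℕ) : #(box R) = (2 * R + 1) ^ 2 := by
  rw [box, card_Icc_prod]
  simp only [Int.card_Icc]
  rw [show ((R : ℤ) + 1 - -(R : ℤ)).toNat = 2 * R + 1 by omega, sq]

/-- The only place where the dimension enters: the `O(R²)` sites of a ramp of width `R`
compensate its squared slope `R⁻²`. -/
theorem card_box_two_mul_mul_inv_sq_le {R : ℕ} (hR : 1 ≤ R) :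
    (#(box (2 * R)) : ℝ) * ((R : ℝ)⁻¹) ^ 2 ≤ 25 := by
  have hR' : (1 : ℝ) ≤ R := by exact_mod_cast hR
  have hratio : (2 * (2 * R) + 1 : ℝ) / R ≤ 5 := by
    rw [div_le_iff₀ (by positivity)]
    linarith
  rw [card_box]
  push_cast
  rw [← mul_pow, ← div_eq_mul_inv]
  have hratio_nonneg : (0 : ℝ) ≤ (2 * (2 * R) + 1) / R := by positivity
  nlinarith

/-- The ramp `k ↦ clamp((k - R) / R, 0, 1)`; truncated subtraction on `ℕ` does the clamping
at `0`. -/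
noncomputable def ramp (R k : ℕ) : ℝ := (min (k - R) R : ℕ) / R

theorem ramp_of_le {R k : ℕ} (hk : k ≤ R) : ramp R k = 0 := by
  simp [ramp, Nat.sub_eq_zero_of_le hk]

theorem ramp_of_two_mul_le {R k : ℕ} (hR : 0 < R) (hk : 2 * R ≤ k) : ramp R k = 1 := by
  rw [ramp, min_eq_right (by omega)]
  exact div_self (by positivity)

noncomputable def rampSlopeSq (R k : ℕ) : ℝ := if k ≤ 2 * R then ((R : ℝ)⁻¹) ^ 2 else 0

theorem sq_ramp_sub_le {R j k : ℕ} (hR : 0 < R) (hjk : j ≤ k + 1) (hkj : k ≤ j + 1) :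
    (ramp R j - ramp R k) ^ 2 ≤ rampSlopeSq R k := by
  rw [rampSlopeSq]
  split_ifs with hk
  · obtain ⟨h₁, h₂⟩ :
        min (j - R) R ≤ min (k - R) R + 1 ∧ min (k - R) R ≤ min (j - R) R + 1 := by
      omega
    have hstep : |((min (j - R) R : ℕ) : ℝ) - (min (k - R) R : ℕ)| ≤ 1 := by
      rw [abs_le]
      constructor
      · linarith [(Nat.cast_le (α := ℝ)).2 h₂, Nat.cast_add_one (R := ℝ) (min (j - R) R)]
      · linarith [(Nat.cast_le (α := ℝ)).2 h₁, Nat.cast_add_one (R := ℝ) (min (k - R) R)]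
    rw [ramp, ramp, ← sub_div, div_pow, ← one_div, div_pow, one_pow]
    gcongr
    simpa using (sq_le_one_iff_abs_le_one _).2 hstep
  · rw [ramp_of_two_mul_le hR (by omega), ramp_of_two_mul_le hR (by omega)]
    simp

noncomputable def tent (r ρ : ℕ) (x : ℤ × ℤ) : ℝ :=
  ramp r (supNorm x) - ramp ρ (supNorm x)

section Tent

variable {r ρ : ℕ}

theorem tent_eq_one (hr : 1 ≤ r) {x : ℤ × ℤ} (h₁ : 2 * r ≤ supNorm x)
    (h₂ : supNorm x ≤ ρ) : tent r ρ x = 1 := by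
  rw [tent, ramp_of_two_mul_le hr h₁, ramp_of_le h₂, sub_zero]

theorem support_tent_subset (hr : 1 ≤ r) (hρ : 2 * r ≤ ρ) :
    support (tent r ρ) ⊆ supNorm ⁻¹' Set.Ioo r (2 * ρ) := by
  intro x hx
  by_contra hmem
  rcases not_and_or.1 hmem with hlow | hhigh
  · exact hx (by rw [tent, ramp_of_le (not_lt.1 hlow), ramp_of_le (by omega), sub_self])
  · exact hx (by rw [tent, ramp_of_two_mul_le hr (by omega),
      ramp_of_two_mul_le (by omega) (not_lt.1 hhigh), sub_self])

theorem support_tent_finite (hr : 1 ≤ r) (hρ : 2 * r ≤ ρ) : (support (tent r ρ)).Finite :=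
  (box (2 * ρ)).finite_toSet.subset fun _ hx =>
    mem_box.2 (support_tent_subset hr hρ hx).2.le

theorem tent_ne_zero (hr : 1 ≤ r) (hρ : 2 * r ≤ ρ) : tent r ρ ≠ 0 := by
  intro h
  have h₁ := tent_eq_one hr (ρ := ρ) (x := ((2 * r : ℕ), 0)) (by simp only [supNorm]; omega)
    (by simp only [supNorm]; omega)
  simp [h] at h₁

theorem sq_tent_sub_le (hr : 1 ≤ r) (hρ : 2 * r ≤ ρ) {x y : ℤ × ℤ}
    (hyx : supNorm y ≤ supNorm x + 1) (hxy : supNorm x ≤ supNorm y + 1) :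
    (tent r ρ y - tent r ρ x) ^ 2 ≤
      2 * (rampSlopeSq r (supNorm x) + rampSlopeSq ρ (supNorm x)) := by
  have h₁ := sq_ramp_sub_le hr hyx hxy
  have h₂ := sq_ramp_sub_le (R := ρ) (by omega) hyx hxy
  rw [tent, tent]
  nlinarith [sq_nonneg (ramp r (supNorm y) - ramp r (supNorm x) + ramp ρ (supNorm y)
    - ramp ρ (supNorm x))]

theorem sum_box_rampSlopeSq_le {R S : ℕ} (hR : 1 ≤ R) (hRS : 2 * R ≤ S) :
    ∑ x ∈ box S, rampSlopeSq R (supNorm x) ≤ 25 := by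
  have hfilter : (box S).filter (fun x => supNorm x ≤ 2 * R) = box (2 * R) := by
    ext x; simp only [mem_filter, mem_box]; omega
  simp only [rampSlopeSq]
  rw [← sum_filter, hfilter, sum_const, nsmul_eq_mul]
  exact card_box_two_mul_mul_inv_sq_le hR

theorem tsum_sq_grad_tent_le (hr : 1 ≤ r) (hρ : 2 * r ≤ ρ) :
    ∑' x : ℤ × ℤ, ((tent r ρ (x.1 + 1, x.2) - tent r ρ x) ^ 2 +
      (tent r ρ (x.1, x.2 + 1) - tent r ρ x) ^ 2) ≤ 200 := by
  set slope := fun x : ℤ × ℤ => rampSlopeSq r (supNorm x) + rampSlopeSq ρ (supNorm x)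
  have hle : ∀ x, (tent r ρ (x.1 + 1, x.2) - tent r ρ x) ^ 2 +
      (tent r ρ (x.1, x.2 + 1) - tent r ρ x) ^ 2 ≤ 4 * slope x := fun x => by
    have h₁ := sq_tent_sub_le hr hρ (x := x) (y := (x.1 + 1, x.2))
      (by simp only [supNorm]; omega) (by simp only [supNorm]; omega)
    have h₂ := sq_tent_sub_le hr hρ (x := x) (y := (x.1, x.2 + 1))
      (by simp only [supNorm]; omega) (by simp only [supNorm]; omega)
    linarith
  have hzero : ∀ x ∉ box (2 * ρ), (tent r ρ (x.1 + 1, x.2) - tent r ρ x) ^ 2 +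
      (tent r ρ (x.1, x.2 + 1) - tent r ρ x) ^ 2 = 0 := fun x hx => by
    have hslope : slope x = 0 := by
      rw [mem_box] at hx
      simp only [slope, rampSlopeSq, if_neg (show ¬supNorm x ≤ 2 * r by omega), if_neg hx,
        add_zero]
    exact le_antisymm (by simpa [hslope] using hle x) (by positivity)
  rw [tsum_eq_sum hzero]
  calc _ ≤ ∑ x ∈ box (2 * ρ), 4 * slope x := sum_le_sum fun x _ => hle x
    _ = 4 * (∑ x ∈ box (2 * ρ), rampSlopeSq r (supNorm x) +
          ∑ x ∈ box (2 * ρ), rampSlopeSq ρ (supNorm x)) := by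
      rw [← mul_sum, sum_add_distrib]
    _ ≤ 4 * (25 + 25) := by
      gcongr
      · exact sum_box_rampSlopeSq_le hr (by omega)
      · exact sum_box_rampSlopeSq_le (by omega) le_rfl
    _ = 200 := by norm_num

end Tent

theorem exists_latticeForm2D_tent_neg {V : ℤ × ℤ → ℝ} (hV0 : ∀ x, 0 ≤ V x)
    (hdiv : ¬Summable V) {r : ℕ} (hr : 1 ≤ r) :
    ∃ ρ, 2 * r ≤ ρ ∧ latticeForm2D V (fun x => (tent r ρ x : ℂ)) < 0 := by
  classical
  obtain ⟨F, hFdisj, hFV⟩ :=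
    exists_disjoint_finset_lt_sum_of_not_summable hV0 hdiv (box (2 * r)) 200
  set ρ := max (2 * r) (F.sup supNorm)
  have hρ : 2 * r ≤ ρ := le_max_left _ _
  have hplateau : ∀ x ∈ F, tent r ρ x = 1 := fun x hx => by
    have hout : ¬supNorm x ≤ 2 * r := fun h => disjoint_left.1 hFdisj hx (mem_box.2 h)
    exact tent_eq_one hr (by omega) ((le_sup hx).trans (le_max_right _ _))
  refine ⟨ρ, hρ, ?_⟩
  rw [latticeForm2D_ofReal]
  have hkin := tsum_sq_grad_tent_le hr hρ
  have hpot := sum_le_tsum_mul_sq_of_eq_one hV0 (support_tent_finite hr hρ) hplateau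
  linarith

end LatticeSchrodinger2D

open LatticeSchrodinger2D in
/-- If `Σ_{x∈ℤ²} V(x) = ∞`, then the two-dimensional lattice Schrödinger operator
`-Δ - V` has infinitely many negative eigenvalues: there is a sequence of nonzero
finitely supported functions with pairwise disjoint supports on which the quadratic
form is negative. -/
theorem infinitely_many_negative_eigenvalues_lattice_2d
    (V : ℤ × ℤ → ℝ) (hV0 : ∀ x, 0 ≤ V x)
    (hdiv : ¬ Summable V) :
    ∃ ψ : ℕ → ℤ × ℤ → ℂ,
      (∀ n, ψ n ≠ 0 ∧ (Function.support (ψ n)).Finite ∧ latticeForm2D V (ψ n) < 0) ∧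
      ∀ m n, m ≠ n → Disjoint (Function.support (ψ m)) (Function.support (ψ n)) := by
  choose! ρ hρ hneg using fun r (hr : 1 ≤ r) => exists_latticeForm2D_tent_neg hV0 hdiv hr
  let radius : ℕ → ℕ := fun n => Nat.rec 1 (fun _ r => 2 * ρ r) n
  have hpos : ∀ n, 1 ≤ radius n := fun n => by
    induction n with
    | zero => exact le_rfl
    | succ n ih => have := hρ _ ih; change 1 ≤ 2 * ρ (radius n); omega
  have hmono : Monotone radius := monotone_nat_of_le_succ fun n => by
    have := hρ _ (hpos n); change radius n ≤ 2 * ρ (radius n); omega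
  have hsupp : ∀ n, support (tent (radius n) (ρ (radius n))) = support fun x =>
      (tent (radius n) (ρ (radius n)) x : ℂ) := fun n =>
    (support_comp_eq Complex.ofReal Complex.ofReal_eq_zero _).symm
  refine ⟨fun n x => tent (radius n) (ρ (radius n)) x,
    fun n => ⟨?_, ?_, hneg _ (hpos n)⟩, ?_⟩
  · exact fun h => tent_ne_zero (hpos n) (hρ _ (hpos n)) (funext fun x => by
      simpa using congrFun h x)
  · exact hsupp n ▸ support_tent_finite (hpos n) (hρ _ (hpos n))
  · intro m n hmn
    rw [← hsupp, ← hsupp]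
    exact ((hmono.pairwise_disjoint_on_Ioo_succ hmn).preimage supNorm).mono
      (support_tent_subset (hpos m) (hρ _ (hpos m)))
      (support_tent_subset (hpos n) (hρ _ (hpos n)))
end

section
/- Let d ∈ {1,2}, let y ∈ ℤ^d and α > 0, and let H be the bounded self-adjoint operator on ℓ²(ℤ^d) defined by (Hψ)(x) = Σ_{x′∈ℤ^d : ‖x−x′‖₁ = 1} (ψ(x) − ψ(x′)) − α·(ψ(y) if x = y, else 0). Then there exists exactly one λ < 0 that is an eigenvalue of H, and the corresponding eigenspace {ψ ∈ ℓ²(ℤ^d) : Hψ = λψ} is one-dimensional. -/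
/-!
For `μ < 0` put `s = (2d - μ)⁻¹` and let `G_s(x) = ∑ₙ Aⁿ(x, 0) sⁿ⁺¹` be the resolvent kernel
`(s⁻¹ - A)⁻¹(x, 0)` of the adjacency operator `A` of `ℤ^d`; here `Aⁿ(x, 0)` counts walks, and
`G_s` is summable because `∑ₓ Aⁿ(x, 0) = (2d)ⁿ`. By a maximum principle `(2d - μ) φ = A φ` has
no nonzero `ℓ²` solution, so an eigenfunction with eigenvalue `μ` must be `α ψ(y) G_s(· - y)`,
and one exists iff `α G_s(0) = 1`. Now `s ↦ G_s(0)` is continuous and strictly increasing on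
`[0, 1/(2d))` and vanishes at `0`; for `d ≤ 2` it tends to `∞` as `s → 1/(2d)` (recurrence),
since `A²ᵐ(0, 0) / (2d)²ᵐ = (C(2m, m) / 4ᵐ)ᵈ` is of order `m^(-d/2)`. So `α G_s(0) = 1` has
exactly one solution, and the eigenspace is spanned by `G_s(· - y)`.
-/

/-- The lattice Schrödinger operator `H = -Δ - α δ_y` on functions `ℤ^d → ℂ`:
`(Hψ)(x) = Σ_{‖x-x'‖₁=1} (ψ(x) - ψ(x')) - α (ψ(y) if x = y else 0)`. -/
noncomputable def deltaHamiltonian (d : ℕ) (y : Fin d → ℤ) (α : ℝ)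
    (ψ : (Fin d → ℤ) → ℂ) (x : Fin d → ℤ) : ℂ :=
  (∑ i : Fin d, ((ψ x - ψ (Function.update x i (x i + 1))) +
      (ψ x - ψ (Function.update x i (x i - 1))))) -
    (α : ℂ) * (if x = y then ψ y else 0)

open Filter Topology

lemma Memℓp.tendsto_cofinite_zero {ι E : Type*} [NormedAddCommGroup E] {f : ι → E}
    {p : ENNReal} (hf : Memℓp f p) (hp : 0 < p.toReal) : Tendsto f cofinite (𝓝 0) := by
  rw [tendsto_zero_iff_norm_tendsto_zero]
  have := ((hf.summable hp).tendsto_cofinite_zero).rpow_const (p := p.toReal⁻¹)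
    (Or.inr (by positivity))
  simpa [← Real.rpow_mul (norm_nonneg _), mul_inv_cancel₀ hp.ne', Real.zero_rpow
    (inv_pos.2 hp).ne'] using this

lemma eventually_lt_tsum_of_not_summable {f : ℕ → ℝ → ℝ} {r : ℝ}
    (hf : ∀ n, ContinuousAt (f n) r) (hnonneg : ∀ᶠ s in 𝓝 r, ∀ n, 0 ≤ f n s)
    (hr : ¬ Summable fun n => f n r) (C : ℝ) :
    ∀ᶠ s in 𝓝 r, (Summable fun n => f n s) → C < ∑' n, f n s := by
  have hr0 : ∀ n, 0 ≤ f n r := fun n => ge_of_tendsto (hf n) (hnonneg.mono fun _ hs => hs n)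
  obtain ⟨N, hN⟩ := ((not_summable_iff_tendsto_nat_atTop_of_nonneg hr0).mp hr).eventually_gt_atTop C
    |>.exists
  have hpartial : ∀ᶠ s in 𝓝 r, C < ∑ n ∈ Finset.range N, f n s :=
    (tendsto_finsetSum _ fun n _ => hf n).eventually (eventually_gt_nhds hN)
  filter_upwards [hpartial, hnonneg] with s hCs hs hsum
  exact hCs.trans_le (hsum.sum_le_tsum _ fun n _ => hs n)

lemma sixteen_pow_le_four_mul_mul_centralBinom_sq {m : ℕ} (hm : m ≠ 0) :
    16 ^ m ≤ 4 * m * m.centralBinom ^ 2 := by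
  induction m with
  | zero => contradiction
  | succ n ih =>
    rcases Nat.eq_zero_or_pos n with rfl | hn
    · decide
    have step : (n + 1) * (n + 1).centralBinom = 2 * (2 * n + 1) * n.centralBinom :=
      Nat.succ_mul_centralBinom_succ n
    have key : 16 ^ (n + 1) * (n + 1) ^ 2 ≤ 4 * (n + 1) * (n + 1).centralBinom ^ 2 * (n + 1) ^ 2 :=
      calc 16 ^ (n + 1) * (n + 1) ^ 2 = 16 * (n + 1) ^ 2 * 16 ^ n := by ring
        _ ≤ 16 * (n + 1) ^ 2 * (4 * n * n.centralBinom ^ 2) := by gcongr; exact ih hn.ne'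
        _ ≤ 4 * (n + 1) * (4 * (2 * n + 1) ^ 2 * n.centralBinom ^ 2) := by nlinarith
        _ = 4 * (n + 1) * (n + 1).centralBinom ^ 2 * (n + 1) ^ 2 := by
          rw [show 4 * (n + 1) * (n + 1).centralBinom ^ 2 * (n + 1) ^ 2
            = 4 * (n + 1) * ((n + 1) * (n + 1).centralBinom) ^ 2 by ring, step]
          ring
    exact Nat.le_of_mul_le_mul_right key (by positivity)

lemma inv_four_mul_le_centralBinom_div_four_pow_sq {k : ℕ} (hk : k ≠ 0) :
    (4 * k : ℝ)⁻¹ ≤ (k.centralBinom / 4 ^ k : ℝ) ^ 2 := by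
  have h : (16 : ℝ) ^ k ≤ 4 * k * k.centralBinom ^ 2 := by
    exact_mod_cast sixteen_pow_le_four_mul_mul_centralBinom_sq hk
  rw [div_pow, ← pow_mul, mul_comm k 2, pow_mul, le_div_iff₀ (by positivity),
    ← div_eq_inv_mul, div_le_iff₀ (by positivity)]
  norm_num
  linarith

section Lattice

variable {d : ℕ}

def neighborSum {M : Type*} [AddCommMonoid M] (f : (Fin d → ℤ) → M) (x : Fin d → ℤ) : M :=
  ∑ i, (f (x + Pi.single i 1) + f (x - Pi.single i 1))

lemma neighborSum_comp_sub_right {M : Type*} [AddCommMonoid M] (f : (Fin d → ℤ) → M)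
    (y x : Fin d → ℤ) : neighborSum (fun z => f (z - y)) x = neighborSum f (x - y) := by
  simp only [neighborSum, sub_right_comm _ y, add_sub_right_comm _ _ y]

lemma neighborSum_sub_smul (ψ G : (Fin d → ℤ) → ℂ) (c : ℂ) (x : Fin d → ℤ) :
    neighborSum (ψ - c • G) x = neighborSum ψ x - c * neighborSum G x := by
  simp only [neighborSum, Pi.sub_apply, Pi.smul_apply, smul_eq_mul, Finset.mul_sum,
    ← Finset.sum_sub_distrib]
  exact Finset.sum_congr rfl fun i _ => by ring

lemma hasSum_neighborSum {f : (Fin d → ℤ) → ℝ} {a : ℝ} (hf : HasSum f a) :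
    HasSum (neighborSum f) (2 * d * a) := by
  have h : ∀ i : Fin d, HasSum (fun x => f (x + Pi.single i 1) + f (x - Pi.single i 1))
      (a + a) := fun i =>
    ((Equiv.addRight (Pi.single i 1)).hasSum_iff.mpr hf).add
      ((Equiv.subRight (Pi.single i 1)).hasSum_iff.mpr hf)
  have hsum := hasSum_sum fun i (_ : i ∈ Finset.univ) => h i
  rw [Finset.sum_const, Finset.card_univ, Fintype.card_fin, nsmul_eq_mul] at hsum
  rw [show 2 * (d : ℝ) * a = d * (a + a) by ring]
  exact hsum

lemma update_eq_add_single (x : Fin d → ℤ) (i : Fin d) (c : ℤ) :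
    Function.update x i (x i + c) = x + Pi.single i c := by
  ext j
  by_cases h : j = i
  · subst h; simp
  · simp [h]

lemma update_eq_sub_single (x : Fin d → ℤ) (i : Fin d) (c : ℤ) :
    Function.update x i (x i - c) = x - Pi.single i c := by
  rw [sub_eq_add_neg, update_eq_add_single, Pi.single_neg, ← sub_eq_add_neg]

lemma deltaHamiltonian_eq (y : Fin d → ℤ) (α : ℝ) (ψ : (Fin d → ℤ) → ℂ) (x : Fin d → ℤ) :
    deltaHamiltonian d y α ψ x
      = 2 * d * ψ x - neighborSum ψ x - α * (if x = y then ψ y else 0) := by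
  simp only [deltaHamiltonian, neighborSum, update_eq_add_single, update_eq_sub_single]
  congr 1
  rw [eq_sub_iff_add_eq, ← Finset.sum_add_distrib]
  simp only [sub_add_sub_comm, sub_add_cancel, Finset.sum_const, Finset.card_univ,
    Fintype.card_fin, nsmul_eq_mul]
  ring

/-- Maximum principle: at a maximum `x₀` of `‖ψ‖`, `E ‖ψ x₀‖ = ‖neighborSum ψ x₀‖ ≤ 2d ‖ψ x₀‖`. -/
lemma eq_zero_of_mul_eq_neighborSum {ψ : (Fin d → ℤ) → ℂ} {E : ℝ}
    (hψ : Tendsto ψ cofinite (𝓝 0)) (hE : 2 * d < E) (h : ∀ x, (E : ℂ) * ψ x = neighborSum ψ x) :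
    ψ = 0 := by
  by_contra hne
  obtain ⟨x₁, hx₁⟩ := Function.ne_iff.mp hne
  have hev : ∀ᶠ x in cocompact _, ‖ψ x‖ ≤ ‖ψ x₁‖ := by
    rw [cocompact_eq_cofinite]
    exact ((tendsto_norm_zero.comp hψ).eventually_lt_const (norm_pos_iff.2 hx₁)).mono
      fun _ => le_of_lt
  obtain ⟨x₀, hmax⟩ :=
    (continuous_of_discreteTopology (f := fun x => ‖ψ x‖)).exists_forall_ge' x₁ hev
  have hle : E * ‖ψ x₀‖ ≤ 2 * d * ‖ψ x₀‖ :=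
    calc E * ‖ψ x₀‖ = ‖neighborSum ψ x₀‖ := by
          rw [← h, norm_mul, Complex.norm_real,
            Real.norm_of_nonneg ((lt_of_le_of_lt (by positivity) hE).le)]
      _ ≤ ∑ i, (‖ψ (x₀ + Pi.single i 1)‖ + ‖ψ (x₀ - Pi.single i 1)‖) :=
          (norm_sum_le _ _).trans (Finset.sum_le_sum fun i _ => norm_add_le _ _)
      _ ≤ ∑ i : Fin d, (‖ψ x₀‖ + ‖ψ x₀‖) := by gcongr <;> apply hmax
      _ = 2 * d * ‖ψ x₀‖ := by simp; ring
  have h0 : ‖ψ x₀‖ ≤ 0 := by nlinarith [norm_nonneg (ψ x₀)]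
  exact hx₁ (norm_le_zero_iff.mp ((hmax x₁).trans h0))

end Lattice

section Walks

variable {d : ℕ}

/-- `walkCount d n x = Aⁿ(x, 0)`, the number of walks of length `n` from `x` to `0`. -/
def walkCount (d : ℕ) : ℕ → (Fin d → ℤ) → ℕ
  | 0, x => if x = 0 then 1 else 0
  | n + 1, x => neighborSum (walkCount d n) x

lemma hasSum_walkCount (n : ℕ) :
    HasSum (fun x => (walkCount d n x : ℝ)) ((2 * d) ^ n) := by
  induction n with
  | zero => simpa [walkCount] using hasSum_ite_eq (0 : Fin d → ℤ) (1 : ℝ)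
  | succ n ih =>
    convert hasSum_neighborSum ih using 1
    · ext x; simp [walkCount, neighborSum]
    · ring

lemma walkCount_le (n : ℕ) (x : Fin d → ℤ) : (walkCount d n x : ℝ) ≤ (2 * d) ^ n :=
  le_hasSum (hasSum_walkCount n) x fun _ _ => Nat.cast_nonneg _

def intWalkCount : ℕ → ℤ → ℕ
  | 0, k => if k = 0 then 1 else 0
  | n + 1, k => intWalkCount n (k + 1) + intWalkCount n (k - 1)

lemma intWalkCount_eq_zero {n : ℕ} {k : ℤ} (h : n < k.natAbs) : intWalkCount n k = 0 := by
  induction n generalizing k with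
  | zero => simp [intWalkCount]; omega
  | succ n ih => rw [intWalkCount, ih (by omega), ih (by omega)]

lemma intWalkCount_sub_two_mul (n j : ℕ) : intWalkCount n (n - 2 * j) = n.choose j := by
  induction n generalizing j with
  | zero =>
    cases j <;> simp [intWalkCount]
    omega
  | succ n ih =>
    rw [intWalkCount]
    cases j with
    | zero =>
      simp only [Nat.cast_zero, mul_zero, sub_zero, Nat.choose_zero_right] at ih ⊢
      rw [intWalkCount_eq_zero (by omega), zero_add]
      simpa using ih 0
    | succ j =>
      rw [Nat.choose_succ_succ', ← ih j, ← ih (j + 1)]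
      push_cast
      ring_nf

lemma intWalkCount_two_mul_zero (m : ℕ) : intWalkCount (2 * m) 0 = m.centralBinom := by
  simpa [Nat.centralBinom] using intWalkCount_sub_two_mul (2 * m) m

lemma walkCount_one (n : ℕ) (x : Fin 1 → ℤ) : walkCount 1 n x = intWalkCount n (x 0) := by
  induction n generalizing x with
  | zero => simp [walkCount, intWalkCount, funext_iff, Fin.forall_fin_one]
  | succ n ih => simp [walkCount, intWalkCount, neighborSum, ih]

/-- In the coordinates `x 0 + x 1` and `x 0 - x 1` the walk on `ℤ^2` is a pair of
independent walks on `ℤ`. -/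
lemma walkCount_two (n : ℕ) (x : Fin 2 → ℤ) :
    walkCount 2 n x = intWalkCount n (x 0 + x 1) * intWalkCount n (x 0 - x 1) := by
  induction n generalizing x with
  | zero =>
    simp only [walkCount, intWalkCount, funext_iff, Fin.forall_fin_two, Pi.zero_apply]
    split_ifs <;> omega
  | succ n ih =>
    simp only [walkCount, intWalkCount, neighborSum, Fin.sum_univ_two, ih]
    simp
    ring_nf

lemma walkCount_two_mul_zero (hd : d = 1 ∨ d = 2) (m : ℕ) :
    walkCount d (2 * m) 0 = m.centralBinom ^ d := by
  rcases hd with rfl | rfl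
  · simp [walkCount_one, intWalkCount_two_mul_zero]
  · simp [walkCount_two, intWalkCount_two_mul_zero, sq]

lemma not_summable_walkCount_zero (hd : d = 1 ∨ d = 2) :
    ¬ Summable fun n => (walkCount d n 0 : ℝ) * (2 * d : ℝ)⁻¹ ^ (n + 1) := by
  have hd0 : (0 : ℝ) < 2 * d := by rcases hd with rfl | rfl <;> norm_num
  have hd4 : (2 * d : ℝ) ≤ 4 := by rcases hd with rfl | rfl <;> norm_num
  have hlow : ∀ k : ℕ, k ≠ 0 →
      (16 * k : ℝ)⁻¹ ≤ (walkCount d (2 * k) 0 : ℝ) * (2 * d : ℝ)⁻¹ ^ (2 * k + 1) := by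
    intro k hk
    set q : ℝ := k.centralBinom / 4 ^ k with hq
    have hq1 : q ≤ 1 := by
      rw [div_le_one (by positivity)]; exact_mod_cast Nat.centralBinom_le_four_pow k
    have hterm : (walkCount d (2 * k) 0 : ℝ) * (2 * d : ℝ)⁻¹ ^ (2 * k + 1) = q ^ d / (2 * d) := by
      rw [walkCount_two_mul_zero hd, hq]
      rcases hd with rfl | rfl
      · rw [inv_pow, pow_succ _ (2 * k), pow_mul]; norm_num; field_simp
      · rw [inv_pow, pow_succ _ (2 * k), div_pow, ← pow_mul, mul_comm k 2, pow_mul, pow_mul]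
        norm_num; field_simp
    rw [hterm, le_div_iff₀ hd0]
    calc (16 * (k : ℝ))⁻¹ * (2 * d) ≤ (16 * (k : ℝ))⁻¹ * 4 := by gcongr
      _ = (4 * k : ℝ)⁻¹ := by field_simp; norm_num
      _ ≤ q ^ 2 := inv_four_mul_le_centralBinom_div_four_pow_sq hk
      _ ≤ q ^ d := pow_le_pow_of_le_one (by positivity) hq1 (by omega)
  intro h
  have hinj : Function.Injective fun m : ℕ => 2 * (m + 1) := fun a b hab => by simpa using hab
  have hharm := ((h.comp_injective hinj).of_nonneg_of_le (fun _ => by positivity)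
    fun m => hlow (m + 1) m.succ_ne_zero).mul_left 16
  refine Real.not_summable_natCast_inv ((summable_nat_add_iff 1).mp (hharm.congr fun m => ?_))
  field_simp

end Walks

section Green

variable {d : ℕ} {s : ℝ}

/-- `green d s x = G_s(x) = (s⁻¹ - A)⁻¹(x, 0)`; the series converges for `0 ≤ s < 1/(2d)`. -/
noncomputable def green (d : ℕ) (s : ℝ) (x : Fin d → ℤ) : ℝ :=
  ∑' n, (walkCount d n x : ℝ) * s ^ (n + 1)

lemma walkCount_mul_pow_le (hs : 0 ≤ s) (n : ℕ) (x : Fin d → ℤ) :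
    (walkCount d n x : ℝ) * s ^ (n + 1) ≤ (2 * d * s) ^ n * s := by
  rw [mul_pow, pow_succ, ← mul_assoc]
  gcongr
  exact walkCount_le n x

lemma summable_walkCount_mul_pow (hs : 0 ≤ s) (hds : 2 * d * s < 1) (x : Fin d → ℤ) :
    Summable fun n => (walkCount d n x : ℝ) * s ^ (n + 1) :=
  .of_nonneg_of_le (fun _ => by positivity) (walkCount_mul_pow_le hs · x)
    ((summable_geometric_of_lt_one (by positivity) hds).mul_right s)

lemma green_nonneg (hs : 0 ≤ s) (x : Fin d → ℤ) : 0 ≤ green d s x :=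
  tsum_nonneg fun _ => by positivity

lemma green_zero_left (x : Fin d → ℤ) : green d 0 x = 0 := by
  simp [green]

/-- First-step decomposition of the walks. -/
lemma green_eq_ite_add_mul_neighborSum (hs : 0 ≤ s) (hds : 2 * d * s < 1) (x : Fin d → ℤ) :
    green d s x = (if x = 0 then s else 0) + s * neighborSum (green d s) x := by
  have hsum := summable_walkCount_mul_pow hs hds
  have hshift : s * neighborSum (green d s) x
      = ∑' n, (walkCount d (n + 1) x : ℝ) * s ^ (n + 1 + 1) := by
    rw [neighborSum]
    simp only [green, ← (hsum _).tsum_add (hsum _)]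
    rw [← Summable.tsum_finsetSum fun i _ => (hsum _).add (hsum _), ← tsum_mul_left]
    congr 1 with n
    simp only [walkCount, neighborSum, Nat.cast_sum, Nat.cast_add, Finset.sum_mul,
      Finset.mul_sum]
    refine Finset.sum_congr rfl fun i _ => by ring
  rw [green, (hsum x).tsum_eq_zero_add, hshift]
  simp [walkCount]

lemma summable_green (hs : 0 ≤ s) (hds : 2 * d * s < 1) : Summable (green d s) := by
  have hfib : ∀ n, HasSum (fun x => (walkCount d n x : ℝ) * s ^ (n + 1)) ((2 * d * s) ^ n * s) :=
    fun n => by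
      rw [show (2 * d * s) ^ n * s = (2 * d) ^ n * s ^ (n + 1) by ring]
      exact (hasSum_walkCount n).mul_right _
  have hjoint : Summable fun p : ℕ × (Fin d → ℤ) => (walkCount d p.1 p.2 : ℝ) * s ^ (p.1 + 1) :=
    (summable_prod_of_nonneg fun _ => by positivity).mpr ⟨fun n => (hfib n).summable,
      by simpa only [(hfib _).tsum_eq] using
        (summable_geometric_of_lt_one (by positivity) hds).mul_right s⟩
  exact ((Equiv.prodComm _ _).summable_iff.mpr hjoint).prod

lemma green_zero_strictMonoOn :
    StrictMonoOn (fun s => green d s 0) {s | 0 ≤ s ∧ 2 * d * s < 1} := by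
  rintro s ⟨hs, -⟩ t ⟨-, hdt⟩ hst
  refine (summable_walkCount_mul_pow hs (by nlinarith) 0).tsum_lt_tsum (i := 0) (fun n => ?_) ?_
    (summable_walkCount_mul_pow (hs.trans hst.le) hdt 0)
  · gcongr
  · simpa [walkCount] using hst

lemma continuousOn_green_zero {t : ℝ} (hdt : 2 * d * t < 1) :
    ContinuousOn (fun s => green d s 0) (Set.Icc 0 t) := by
  rcases lt_or_ge t 0 with ht | ht
  · simp [Set.Icc_eq_empty_of_lt ht]
  refine continuousOn_tsum (fun n => by fun_prop) (summable_walkCount_mul_pow ht hdt 0) ?_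
  rintro n s ⟨hs, hst⟩
  rw [Real.norm_of_nonneg (by positivity)]
  gcongr

lemma exists_lt_green_zero (hd : d = 1 ∨ d = 2) (C : ℝ) :
    ∃ s : ℝ, 0 < s ∧ 2 * d * s < 1 ∧ C < green d s 0 := by
  have hd0 : (0 : ℝ) < 2 * d := by rcases hd with rfl | rfl <;> norm_num
  have hpos : ∀ᶠ s in 𝓝 (2 * d : ℝ)⁻¹, 0 < s := eventually_gt_nhds (inv_pos.2 hd0)
  have hlt := eventually_lt_tsum_of_not_summable
    (f := fun n s => (walkCount d n 0 : ℝ) * s ^ (n + 1)) (fun n => by fun_prop)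
    (hpos.mono fun s hs n => by positivity) (not_summable_walkCount_zero hd) C
  obtain ⟨s, ⟨hCs, hs0⟩, hsr⟩ :=
    (((hlt.and hpos).filter_mono nhdsWithin_le_nhds).and
      (eventually_mem_nhdsWithin (s := Set.Iio (2 * d : ℝ)⁻¹))).exists
  have hds : 2 * d * s < 1 :=
    calc 2 * d * s < 2 * d * (2 * d : ℝ)⁻¹ := by gcongr; exact hsr
      _ = 1 := mul_inv_cancel₀ hd0.ne'
  exact ⟨s, hs0, hds, hCs (summable_walkCount_mul_pow hs0.le hds 0)⟩

lemma exists_mul_green_zero_eq_one (hd : d = 1 ∨ d = 2) {α : ℝ} (hα : 0 < α) :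
    ∃ s : ℝ, 0 < s ∧ 2 * d * s < 1 ∧ α * green d s 0 = 1 := by
  obtain ⟨t, ht0, hdt, hαt⟩ := exists_lt_green_zero hd α⁻¹
  obtain ⟨s, ⟨hs0, hst⟩, hs⟩ := intermediate_value_Icc ht0.le (continuousOn_green_zero hdt)
    ⟨(green_zero_left 0).trans_le (inv_pos.2 hα).le, hαt.le⟩
  replace hs : green d s 0 = α⁻¹ := hs
  have hs0' : s ≠ 0 := by
    rintro rfl
    exact (inv_pos.2 hα).ne (by rw [← hs, green_zero_left])
  refine ⟨s, lt_of_le_of_ne hs0 (Ne.symm hs0'), ?_, ?_⟩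
  · nlinarith
  · rw [hs, mul_inv_cancel₀ hα.ne']

end Green

section Eigen

variable {d : ℕ} {s : ℝ}

noncomputable def greenAt (d : ℕ) (s : ℝ) (y x : Fin d → ℤ) : ℂ :=
  green d s (x - y)

lemma memℓp_greenAt (hs : 0 ≤ s) (hds : 2 * d * s < 1) (y : Fin d → ℤ) :
    Memℓp (greenAt d s y) 2 := by
  have h1 : Memℓp (greenAt d s y) 1 :=
    memℓp_gen (((Equiv.subRight y).summable_iff.mpr (summable_green hs hds)).congr fun x => by
      simp [greenAt, abs_of_nonneg (green_nonneg hs _)])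
  exact h1.of_exponent_ge (by norm_num)

lemma inv_mul_greenAt_sub_neighborSum (hs : 0 < s) (hds : 2 * d * s < 1) (y x : Fin d → ℤ) :
    (s⁻¹ : ℂ) * greenAt d s y x - neighborSum (greenAt d s y) x = if x = y then 1 else 0 := by
  have h := green_eq_ite_add_mul_neighborSum hs.le hds (x - y)
  simp only [sub_eq_zero] at h
  have hnb : neighborSum (greenAt d s y) x = (neighborSum (green d s) (x - y) : ℝ) := by
    rw [← neighborSum_comp_sub_right]
    push_cast [neighborSum, greenAt]
    rfl
  rw [hnb, greenAt, h]
  have hs' : (s : ℂ) ≠ 0 := by exact_mod_cast hs.ne'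
  split_ifs <;> push_cast <;> field_simp <;> ring

variable {y : Fin d → ℤ} {α μ : ℝ}

lemma inv_two_mul_sub_pos_and_lt (hμ : μ < 0) :
    0 < (2 * d - μ)⁻¹ ∧ 2 * d * (2 * d - μ)⁻¹ < 1 := by
  have hE : 0 < 2 * (d : ℝ) - μ := sub_pos.2 (hμ.trans_le (by positivity))
  refine ⟨inv_pos.2 hE, ?_⟩
  rw [← div_eq_mul_inv, div_lt_one hE]
  linarith

lemma deltaHamiltonian_greenAt (hs : 0 < s) (hds : 2 * d * s < 1) (hαs : α * green d s 0 = 1)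
    (x : Fin d → ℤ) :
    deltaHamiltonian d y α (greenAt d s y) x = (2 * d - s⁻¹ : ℝ) * greenAt d s y x := by
  have hG := inv_mul_greenAt_sub_neighborSum hs hds y x
  have hGy : (α : ℂ) * greenAt d s y y = 1 := by
    rw [greenAt, sub_self]; exact_mod_cast hαs
  rw [deltaHamiltonian_eq]
  push_cast
  split_ifs at hG ⊢ with hxy
  · subst hxy; linear_combination hG - hGy
  · linear_combination hG

lemma eq_smul_greenAt_of_eigen (hμ : μ < 0) {ψ : (Fin d → ℤ) → ℂ} (hψ : Memℓp ψ 2)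
    (heig : ∀ x, deltaHamiltonian d y α ψ x = μ * ψ x) :
    ψ = (α * ψ y) • greenAt d (2 * d - μ)⁻¹ y := by
  obtain ⟨hs, hds⟩ := inv_two_mul_sub_pos_and_lt (d := d) hμ
  rw [← sub_eq_zero]
  refine eq_zero_of_mul_eq_neighborSum (E := 2 * d - μ)
    ((hψ.sub ((memℓp_greenAt hs.le hds y).const_smul _)).tendsto_cofinite_zero (by norm_num))
    (by linarith) fun x => ?_
  have hG := inv_mul_greenAt_sub_neighborSum hs hds y x
  have hψx := heig x
  rw [deltaHamiltonian_eq] at hψx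
  push_cast at hG
  rw [inv_inv] at hG
  rw [neighborSum_sub_smul, Pi.sub_apply, Pi.smul_apply, smul_eq_mul]
  push_cast
  split_ifs at hG hψx with hxy
  · subst hxy; linear_combination hψx - α * ψ x * hG
  · linear_combination hψx - α * ψ y * hG

lemma mul_green_zero_eq_one_of_eigen (hμ : μ < 0) {ψ : (Fin d → ℤ) → ℂ} (hψ : Memℓp ψ 2)
    (heig : ∀ x, deltaHamiltonian d y α ψ x = μ * ψ x) (hne : ψ ≠ 0) :
    α * green d (2 * d - μ)⁻¹ 0 = 1 := by
  have hrep := eq_smul_greenAt_of_eigen hμ hψ heig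
  have hy : ψ y ≠ 0 := fun h0 => hne (by rw [hrep, h0]; simp)
  have h := congrFun hrep y
  simp only [Pi.smul_apply, greenAt, sub_self, smul_eq_mul] at h
  have : ψ y * (α * green d (2 * d - μ)⁻¹ 0 : ℝ) = ψ y * 1 := by push_cast; linear_combination -h
  exact_mod_cast mul_left_cancel₀ hy this

end Eigen

/-- For `d ∈ {1,2}`, any `y ∈ ℤ^d` and any `α > 0`, the operator `-Δ - α δ_y` on
`ℓ²(ℤ^d)` has exactly one negative eigenvalue, and it is simple. -/
theorem delta_potential_unique_negative_eigenvalue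
    (d : ℕ) (hd : d = 1 ∨ d = 2) (y : Fin d → ℤ) (α : ℝ) (hα : 0 < α) :
    ∃ lam : ℝ, lam < 0 ∧
      (∃ ψ : (Fin d → ℤ) → ℂ, Memℓp ψ 2 ∧ ψ ≠ 0 ∧
        ∀ x, deltaHamiltonian d y α ψ x = (lam : ℂ) * ψ x) ∧
      (∀ mu : ℝ, mu < 0 →
        (∃ ψ : (Fin d → ℤ) → ℂ, Memℓp ψ 2 ∧ ψ ≠ 0 ∧
          ∀ x, deltaHamiltonian d y α ψ x = (mu : ℂ) * ψ x) → mu = lam) ∧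
      (∀ ψ₁ ψ₂ : (Fin d → ℤ) → ℂ,
        Memℓp ψ₁ 2 → (∀ x, deltaHamiltonian d y α ψ₁ x = (lam : ℂ) * ψ₁ x) →
        Memℓp ψ₂ 2 → (∀ x, deltaHamiltonian d y α ψ₂ x = (lam : ℂ) * ψ₂ x) →
        ψ₁ ≠ 0 → ∃ c : ℂ, ψ₂ = c • ψ₁) := by
  obtain ⟨t, ht0, hdt, hαt⟩ := exists_mul_green_zero_eq_one hd hα
  have hlam : 2 * d - t⁻¹ < 0 := by
    nlinarith [mul_inv_cancel₀ ht0.ne', mul_pos (inv_pos.2 ht0) (sub_pos.2 hdt)]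
  have hGne : greenAt d t y ≠ 0 := fun h => by
    simpa [greenAt, right_ne_zero_of_mul_eq_one hαt] using congrFun h y
  refine ⟨2 * d - t⁻¹, hlam, ⟨greenAt d t y, memℓp_greenAt ht0.le hdt y, hGne,
    deltaHamiltonian_greenAt ht0 hdt hαt⟩, ?_, ?_⟩
  · rintro μ hμ ⟨ψ, hψ, hne, heig⟩
    have hst : (2 * d - μ)⁻¹ = t := green_zero_strictMonoOn.injOn
      ⟨(inv_two_mul_sub_pos_and_lt hμ).1.le, (inv_two_mul_sub_pos_and_lt hμ).2⟩ ⟨ht0.le, hdt⟩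
      (mul_left_cancel₀ hα.ne' ((mul_green_zero_eq_one_of_eigen hμ hψ heig hne).trans hαt.symm))
    rw [← hst, inv_inv]; ring
  · intro ψ₁ ψ₂ hψ₁ heig₁ hψ₂ heig₂ hne
    have h₁ := eq_smul_greenAt_of_eigen hlam hψ₁ heig₁
    have h₂ := eq_smul_greenAt_of_eigen hlam hψ₂ heig₂
    have hy : ψ₁ y ≠ 0 := fun h0 => hne (by rw [h₁, h0]; simp)
    refine ⟨ψ₂ y / ψ₁ y, funext fun x => ?_⟩
    rw [Pi.smul_apply, congrFun h₁ x, congrFun h₂ x]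
    simp only [Pi.smul_apply, smul_eq_mul]
    field_simp
end

section
/- For every α ∈ (0,1], lim_{t→∞} t^{1/(2α)} · (1/(2π)) ∫_{−π}^{π} exp(−t (4 sin²(φ/2))^α) dφ = Γ(1/(2α)) / (2πα), where Γ is the Gamma function. -/
/-!
Put `T = t ^ (1 / (2α))`, so that `t (4 sin² (φ/2))^α = |2T sin (φ/2)|^(2α)`, and substitute
`φ = u / T`: the rescaled kernel `T · ∫_{-π}^{π} exp (-t (4 sin² (φ/2))^α) dφ` becomes
`∫_{-πT}^{πT} exp (-|2T sin (u/(2T))|^(2α)) du`. As `T → ∞` the integrand tends to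
`exp (-|u|^(2α))`, and Jordan's inequality `|sin x| ≥ 2|x|/π` on `[-π/2, π/2]` dominates it by
`exp (-|2u/π|^(2α))`.
Dominated convergence leaves `∫ exp (-|u|^(2α)) du = 2 Γ (1/(2α) + 1) = Γ (1/(2α)) / α`.
-/

open Real MeasureTheory Set Filter Topology

theorem integrable_comp_abs {E : Type*} [NormedAddCommGroup E] {f : ℝ → E}
    (hf : IntegrableOn f (Ioi 0)) : Integrable fun x => f |x| := by
  have hIoi : IntegrableOn (fun x => f |x|) (Ioi 0) :=
    hf.congr_fun (fun x hx => by rw [abs_of_pos hx]) measurableSet_Ioi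
  rw [← integrableOn_univ, ← Iic_union_Ioi (a := (0 : ℝ)), integrableOn_union]
  refine ⟨?_, hIoi⟩
  have hneg : MeasurableEmbedding fun x : ℝ => -x := (Homeomorph.neg ℝ).measurableEmbedding
  rw [← Measure.map_neg_eq_self (volume : Measure ℝ), hneg.integrableOn_map_iff]
  simp_rw [Function.comp_def, abs_neg, neg_preimage, neg_Iic, neg_zero]
  exact (integrableOn_Ici_iff_integrableOn_Ioi).mpr hIoi

theorem integrable_exp_neg_abs_rpow {p : ℝ} (hp : 0 < p) :
    Integrable fun x : ℝ => exp (-|x| ^ p) :=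
  integrable_comp_abs (f := fun x => exp (-x ^ p)) <| by
    simpa using integrableOn_rpow_mul_exp_neg_rpow (s := 0) (by norm_num) hp

theorem integral_exp_neg_abs_rpow {p : ℝ} (hp : 0 < p) :
    ∫ x : ℝ, exp (-|x| ^ p) = 2 * Gamma (1 / p + 1) := by
  rw [integral_comp_abs (f := fun x => exp (-x ^ p)), integral_exp_neg_rpow hp]

theorem setIntegral_Ioc_mul_comp_div {E : Type*} [NormedAddCommGroup E] [NormedSpace ℝ E]
    (f : ℝ → E) {a b T : ℝ} (hab : a ≤ b) (hT : 0 < T) :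
    ∫ u in Ioc (a * T) (b * T), f (u / T) = T • ∫ φ in a..b, f φ := by
  rw [← intervalIntegral.integral_of_le (mul_le_mul_of_nonneg_right hab hT.le),
    intervalIntegral.integral_comp_div f hT.ne', mul_div_cancel_right₀ _ hT.ne',
    mul_div_cancel_right₀ _ hT.ne']

theorem mul_four_mul_sq_rpow {α t : ℝ} (hα : α ≠ 0) (ht : 0 ≤ t) (y : ℝ) :
    t * (4 * y ^ 2) ^ α = |2 * t ^ (1 / (2 * α)) * y| ^ (2 * α) := by
  have ht' : (t ^ (1 / (2 * α))) ^ (2 * α) = t := by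
    rw [← rpow_mul ht, one_div_mul_cancel (mul_ne_zero two_ne_zero hα), rpow_one]
  rw [mul_comm 2, mul_assoc, abs_mul, abs_of_nonneg (rpow_nonneg ht _),
    mul_rpow (rpow_nonneg ht _) (abs_nonneg _), ht', rpow_mul (abs_nonneg _)]
  norm_num [mul_pow, sq_abs]

theorem tendsto_mul_sin_div_atTop (u : ℝ) :
    Tendsto (fun c : ℝ => c * sin (u / c)) atTop (𝓝 u) := by
  have hsinc : Tendsto (fun c : ℝ => u * sinc (u / c)) atTop (𝓝 u) := by
    simpa using ((continuous_sinc.tendsto 0).comp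
      (tendsto_const_nhds.div_atTop tendsto_id)).const_mul u
  refine hsinc.congr' ?_
  filter_upwards [eventually_gt_atTop 0] with c hc
  rcases eq_or_ne u 0 with rfl | hu
  · simp
  · rw [sinc_of_ne_zero (div_ne_zero hu hc.ne')]
    field_simp

theorem abs_two_div_pi_mul_le_abs_mul_sin_div {c u : ℝ} (hc : 0 < c) (hu : |u| ≤ π / 2 * c) :
    |2 / π * u| ≤ |c * sin (u / c)| := by
  have hx : |u / c| ≤ π / 2 := by rwa [abs_div, abs_of_pos hc, div_le_iff₀ hc]
  rw [abs_mul, abs_mul, abs_of_pos hc, abs_of_pos (by positivity : 0 < 2 / π)]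
  calc 2 / π * |u| = c * (2 / π * |u / c|) := by
        rw [abs_div, abs_of_pos hc]; field_simp
    _ ≤ c * |sin (u / c)| := by gcongr; exact mul_abs_le_abs_sin hx

theorem tendsto_mul_integral_exp_neg_abs_two_mul_sin_rpow {p : ℝ} (hp : 0 < p) :
    Tendsto (fun T : ℝ => T * ∫ φ in (-π)..π, exp (-|2 * T * sin (φ / 2)| ^ p)) atTop
      (𝓝 (∫ u, exp (-|u| ^ p))) := by
  set g : ℝ → ℝ := fun x => exp (-|x| ^ p)
  have hg : Continuous g := by have := continuous_rpow_const hp.le; fun_prop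
  set F : ℝ → ℝ → ℝ := fun T =>
    (Ioc (-π * T) (π * T)).indicator fun u => g (2 * T * sin (u / (2 * T)))
  have hF : ∀ᶠ T in atTop, ∫ u, F T u = T * ∫ φ in (-π)..π, g (2 * T * sin (φ / 2)) := by
    filter_upwards [eventually_gt_atTop 0] with T hT
    have h := setIntegral_Ioc_mul_comp_div (fun φ => g (2 * T * sin (φ / 2)))
      (by linarith [pi_pos] : -π ≤ π) hT
    simp_rw [div_div, mul_comm T 2] at h
    rw [integral_indicator measurableSet_Ioc, h, smul_eq_mul]
  have hbound : ∀ᶠ T in atTop, ∀ u, ‖F T u‖ ≤ g (2 / π * u) := by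
    filter_upwards [eventually_gt_atTop 0] with T hT u
    simp only [F]
    by_cases hu : u ∈ Ioc (-π * T) (π * T)
    · have hu' : |u| ≤ π / 2 * (2 * T) := by
        rw [abs_le]; constructor <;> linarith [hu.1, hu.2]
      rw [indicator_of_mem hu, norm_of_nonneg (exp_pos _).le, exp_le_exp, neg_le_neg_iff]
      exact rpow_le_rpow (abs_nonneg _)
        (abs_two_div_pi_mul_le_abs_mul_sin_div (by positivity) hu') hp.le
    · rw [indicator_of_notMem hu, norm_zero]
      exact (exp_pos _).le
  have hlim : ∀ u, Tendsto (fun T => F T u) atTop (𝓝 (g u)) := by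
    intro u
    have hmem : ∀ᶠ T in atTop, u ∈ Ioc (-π * T) (π * T) := by
      filter_upwards [eventually_gt_atTop (|u| / π)] with T hT
      rw [div_lt_iff₀ pi_pos] at hT
      constructor <;> linarith [neg_abs_le u, le_abs_self u]
    refine ((hg.tendsto u).comp ((tendsto_mul_sin_div_atTop u).comp
      (tendsto_id.const_mul_atTop two_pos))).congr' ?_
    filter_upwards [hmem] with T hT
    simp only [F, Function.comp_apply, id, indicator_of_mem hT]
  have hmeas : ∀ T, AEStronglyMeasurable (F T) := fun T =>
    (by fun_prop : Continuous _).aestronglyMeasurable.indicator measurableSet_Ioc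
  have hdom : Integrable fun u => g (2 / π * u) :=
    (integrable_exp_neg_abs_rpow hp).comp_mul_left' (by positivity)
  exact (tendsto_integral_filter_of_dominated_convergence _ (Eventually.of_forall hmeas)
    (hbound.mono fun _ h => ae_of_all _ h) hdom (Eventually.of_forall hlim)).congr' hF

theorem fracHeatKernel_diagonal_asymptotics_general (α : ℝ) (hα0 : 0 < α) :
    Filter.Tendsto
      (fun t : ℝ => t ^ (1 / (2 * α)) *
        ((1 / (2 * Real.pi)) *
          ∫ φ in (-Real.pi)..Real.pi, Real.exp (-t * (4 * Real.sin (φ / 2) ^ 2) ^ α)))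
      Filter.atTop
      (nhds (Real.Gamma (1 / (2 * α)) / (2 * Real.pi * α))) := by
  have hp : 0 < 2 * α := by positivity
  have hlim := ((tendsto_mul_integral_exp_neg_abs_two_mul_sin_rpow hp).comp
    (tendsto_rpow_atTop (one_div_pos.mpr hp))).const_mul (1 / (2 * π))
  rw [integral_exp_neg_abs_rpow hp, Gamma_add_one (one_div_ne_zero hp.ne')] at hlim
  convert hlim.congr' ?_ using 2
  · field_simp
  · filter_upwards [eventually_ge_atTop 0] with t ht
    simp_rw [Function.comp_apply, neg_mul, mul_four_mul_sq_rpow hα0.ne' ht]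
    ring

/-- On-diagonal long-time asymptotics of the semigroup `e^{-t(-Δ)^α}` on `ℤ`
(Lemma 7.2): `p_α(t,x,x) ∼ Γ(1/(2α))/(2πα) · t^{-1/(2α)}` as `t → ∞`. -/
theorem fracHeatKernel_diagonal_asymptotics (α : ℝ) (hα0 : 0 < α) (hα1 : α ≤ 1) :
    Filter.Tendsto
      (fun t : ℝ => t ^ (1 / (2 * α)) *
        ((1 / (2 * Real.pi)) *
          ∫ φ in (-Real.pi)..Real.pi, Real.exp (-t * (4 * Real.sin (φ / 2) ^ 2) ^ α)))
      Filter.atTop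
      (nhds (Real.Gamma (1 / (2 * α)) / (2 * Real.pi * α))) :=
  fracHeatKernel_diagonal_asymptotics_general α hα0
end
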